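/- arXiv:2306.06714 — 4 statements merged into one kernel-verified Lean document; each statement's English description precedes it below -/
import Mathlib

section
/- For the path P_n on n ≥ 2 vertices, L⊠_V(P_n)=L×_V(P_n)=L⊠_E(P_n)=L×_E(P_n)=n if n is even, and =n+1 if n is odd. -/
open SimpleGraph

/-- An `l`-track on `G`: a surjective function whose consecutive values are adjacent. -/
def IsTrack {V : Type*} (G : SimpleGraph V) {l : ℕ} (f : Fin l → V) : Prop :=
  Function.Surjective f ∧
    ∀ i : ℕ, ∀ hi : i + 1 < l, G.Adj (f ⟨i, Nat.lt_of_succ_lt hi⟩) (f ⟨i + 1, hi⟩)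

/-- A lazy `l`-track on `G`: consecutive values are adjacent or equal. -/
def IsLazyTrack {V : Type*} (G : SimpleGraph V) {l : ℕ} (f : Fin l → V) : Prop :=
  Function.Surjective f ∧
    ∀ i : ℕ, ∀ hi : i + 1 < l,
      G.Adj (f ⟨i, Nat.lt_of_succ_lt hi⟩) (f ⟨i + 1, hi⟩) ∨
        f ⟨i, Nat.lt_of_succ_lt hi⟩ = f ⟨i + 1, hi⟩

/-- The condition that every edge of `G` is traversed by `f`. -/
def SweepCond {V : Type*} (G : SimpleGraph V) {l : ℕ} (f : Fin l → V) : Prop :=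
  ∀ e ∈ G.edgeSet, ∃ i : ℕ, ∃ hi : i + 1 < l,
    e = s(f ⟨i, Nat.lt_of_succ_lt hi⟩, f ⟨i + 1, hi⟩)

/-- An `l`-sweep on `G`: an `l`-track traversing every edge. -/
def IsSweep {V : Type*} (G : SimpleGraph V) {l : ℕ} (f : Fin l → V) : Prop :=
  IsTrack G f ∧ SweepCond G f

/-- A lazy `l`-sweep on `G`: a lazy `l`-track traversing every edge. -/
def IsLazySweep {V : Type*} (G : SimpleGraph V) {l : ℕ} (f : Fin l → V) : Prop :=
  IsLazyTrack G f ∧ SweepCond G f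

/-- `f` and `g` are opposite: at each step exactly `f` moves iff `g` stays. -/
def IsOpposite {V : Type*} (G : SimpleGraph V) {l : ℕ} (f g : Fin l → V) : Prop :=
  ∀ i : ℕ, ∀ hi : i + 1 < l,
    (G.Adj (f ⟨i, Nat.lt_of_succ_lt hi⟩) (f ⟨i + 1, hi⟩) ↔
      g ⟨i, Nat.lt_of_succ_lt hi⟩ = g ⟨i + 1, hi⟩)

/-- The distance `m_G(f,g)`: minimal distance between simultaneous positions. -/
noncomputable def mDist {V : Type*} (G : SimpleGraph V) {l : ℕ} (f g : Fin l → V) : ℕ :=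
  sInf {d | ∃ i : Fin l, G.dist (f i) (g i) = d}

/-- Strong vertex span `σ⊠_V(G)`. -/
noncomputable def strongVertexSpan {V : Type*} (G : SimpleGraph V) : ℕ :=
  sSup {d | ∃ (l : ℕ) (f g : Fin l → V), IsLazyTrack G f ∧ IsLazyTrack G g ∧ mDist G f g = d}

/-- Direct vertex span `σ×_V(G)`. -/
noncomputable def directVertexSpan {V : Type*} (G : SimpleGraph V) : ℕ :=
  sSup {d | ∃ (l : ℕ) (f g : Fin l → V), IsTrack G f ∧ IsTrack G g ∧ mDist G f g = d}

/-- Cartesian vertex span `σ□_V(G)`. -/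
noncomputable def cartesianVertexSpan {V : Type*} (G : SimpleGraph V) : ℕ :=
  sSup {d | ∃ (l : ℕ) (f g : Fin l → V),
    IsLazyTrack G f ∧ IsLazyTrack G g ∧ IsOpposite G f g ∧ mDist G f g = d}

/-- Strong edge span `σ⊠_E(G)`. -/
noncomputable def strongEdgeSpan {V : Type*} (G : SimpleGraph V) : ℕ :=
  sSup {d | ∃ (l : ℕ) (f g : Fin l → V), IsLazySweep G f ∧ IsLazySweep G g ∧ mDist G f g = d}

/-- Direct edge span `σ×_E(G)`. -/
noncomputable def directEdgeSpan {V : Type*} (G : SimpleGraph V) : ℕ :=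
  sSup {d | ∃ (l : ℕ) (f g : Fin l → V), IsSweep G f ∧ IsSweep G g ∧ mDist G f g = d}

/-- Cartesian edge span `σ□_E(G)`. -/
noncomputable def cartesianEdgeSpan {V : Type*} (G : SimpleGraph V) : ℕ :=
  sSup {d | ∃ (l : ℕ) (f g : Fin l → V),
    IsLazySweep G f ∧ IsLazySweep G g ∧ IsOpposite G f g ∧ mDist G f g = d}

/-- `L⊠_V(G)`: minimal length of lazy tracks realizing the strong vertex span. -/
noncomputable def strongVertexL {V : Type*} (G : SimpleGraph V) : ℕ :=
  sInf {l | ∃ f g : Fin l → V,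
    IsLazyTrack G f ∧ IsLazyTrack G g ∧ mDist G f g = strongVertexSpan G}

/-- `L×_V(G)`. -/
noncomputable def directVertexL {V : Type*} (G : SimpleGraph V) : ℕ :=
  sInf {l | ∃ f g : Fin l → V,
    IsTrack G f ∧ IsTrack G g ∧ mDist G f g = directVertexSpan G}

/-- `L□_V(G)`. -/
noncomputable def cartesianVertexL {V : Type*} (G : SimpleGraph V) : ℕ :=
  sInf {l | ∃ f g : Fin l → V,
    IsLazyTrack G f ∧ IsLazyTrack G g ∧ IsOpposite G f g ∧ mDist G f g = cartesianVertexSpan G}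

/-- `L⊠_E(G)`. -/
noncomputable def strongEdgeL {V : Type*} (G : SimpleGraph V) : ℕ :=
  sInf {l | ∃ f g : Fin l → V,
    IsLazySweep G f ∧ IsLazySweep G g ∧ mDist G f g = strongEdgeSpan G}

/-- `L×_E(G)`. -/
noncomputable def directEdgeL {V : Type*} (G : SimpleGraph V) : ℕ :=
  sInf {l | ∃ f g : Fin l → V,
    IsSweep G f ∧ IsSweep G g ∧ mDist G f g = directEdgeSpan G}

/-- `L□_E(G)`. -/
noncomputable def cartesianEdgeL {V : Type*} (G : SimpleGraph V) : ℕ :=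
  sInf {l | ∃ f g : Fin l → V,
    IsLazySweep G f ∧ IsLazySweep G g ∧ IsOpposite G f g ∧ mDist G f g = cartesianEdgeSpan G}


namespace StmtAux

open SimpleGraph

variable {n : ℕ}

lemma conn (hn : 2 ≤ n) : (SimpleGraph.pathGraph n).Connected := by
  obtain ⟨m, rfl⟩ : ∃ m, n = m + 1 := ⟨n - 1, by omega⟩
  exact SimpleGraph.pathGraph_connected m

lemma lazy_step {l : ℕ} {f : Fin l → Fin n} (hf : IsLazyTrack (SimpleGraph.pathGraph n) f)
    (i j : Fin l) (hij : (i : ℕ) + 1 = (j : ℕ)) :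
    (f i).val ≤ (f j).val + 1 ∧ (f j).val ≤ (f i).val + 1 := by
  have hi : (i : ℕ) + 1 < l := hij ▸ j.isLt
  have h := hf.2 i.val hi
  have e1 : (⟨(i : ℕ), Nat.lt_of_succ_lt hi⟩ : Fin l) = i := rfl
  have e2 : (⟨(i : ℕ) + 1, hi⟩ : Fin l) = j := Fin.ext hij
  rw [e1, e2] at h
  rcases h with h | h
  · rcases SimpleGraph.pathGraph_adj.mp h with h | h <;> omega
  · rw [h]; omega

lemma mono_gap {l : ℕ} {f g : Fin l → Fin n}
    (hf : IsLazyTrack (SimpleGraph.pathGraph n) f) (hg : IsLazyTrack (SimpleGraph.pathGraph n) g)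
    (hgap : ∀ i : Fin l, (f i).val + 2 ≤ (g i).val ∨ (g i).val + 2 ≤ (f i).val)
    (hl : 0 < l) (h0 : (f ⟨0, hl⟩).val < (g ⟨0, hl⟩).val) :
    ∀ i : ℕ, ∀ hi : i < l, (f ⟨i, hi⟩).val + 2 ≤ (g ⟨i, hi⟩).val := by
  intro i
  induction i with
  | zero =>
    intro hi
    show (f ⟨0, hl⟩).val + 2 ≤ (g ⟨0, hl⟩).val
    rcases hgap ⟨0, hl⟩ with h | h <;> omega
  | succ k ih =>
    intro hi
    have hk : k < l := Nat.lt_of_succ_lt hi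
    have ihk := ih hk
    have hfs := lazy_step hf ⟨k, hk⟩ ⟨k + 1, hi⟩ rfl
    have hgs := lazy_step hg ⟨k, hk⟩ ⟨k + 1, hi⟩ rfl
    rcases hgap ⟨k + 1, hi⟩ with h | h <;> omega

lemma no_cross (hn : 2 ≤ n) {l : ℕ} {f g : Fin l → Fin n}
    (hf : IsLazyTrack (SimpleGraph.pathGraph n) f) (hg : IsLazyTrack (SimpleGraph.pathGraph n) g)
    (hgap : ∀ i : Fin l, (f i).val + 2 ≤ (g i).val ∨ (g i).val + 2 ≤ (f i).val) :
    False := by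
  obtain ⟨i0, -⟩ := hf.1 ⟨0, by omega⟩
  have hl : 0 < l := i0.pos
  rcases hgap ⟨0, hl⟩ with h0 | h0
  · obtain ⟨j, hj⟩ := hf.1 ⟨n - 1, by omega⟩
    have h2 : (f j).val + 2 ≤ (g j).val := mono_gap hf hg hgap hl (by omega) j.val j.isLt
    have hv : (f j).val = n - 1 := by rw [hj]
    have hb := (g j).isLt
    omega
  · obtain ⟨j, hj⟩ := hg.1 ⟨n - 1, by omega⟩
    have h2 : (g j).val + 2 ≤ (f j).val :=
      mono_gap hg hf (fun i => (hgap i).symm) hl (by omega) j.val j.isLt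
    have hv : (g j).val = n - 1 := by rw [hj]
    have hb := (f j).isLt
    omega

lemma mdist_le_one (hn : 2 ≤ n) {l : ℕ} {f g : Fin l → Fin n}
    (hf : IsLazyTrack (SimpleGraph.pathGraph n) f) (hg : IsLazyTrack (SimpleGraph.pathGraph n) g) :
    mDist (SimpleGraph.pathGraph n) f g ≤ 1 := by
  by_contra hcon
  push_neg at hcon
  apply no_cross hn hf hg
  intro i
  have hs : mDist (SimpleGraph.pathGraph n) f g ≤ (SimpleGraph.pathGraph n).dist (f i) (g i) :=
    Nat.sInf_le ⟨i, rfl⟩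
  have h2 : 2 ≤ (SimpleGraph.pathGraph n).dist (f i) (g i) := by omega
  by_contra hc
  push_neg at hc
  obtain ⟨hc1, hc2⟩ := hc
  rcases Nat.lt_trichotomy (f i).val (g i).val with h | h | h
  · have hadj : (SimpleGraph.pathGraph n).Adj (f i) (g i) :=
      SimpleGraph.pathGraph_adj.mpr (Or.inl (by omega))
    rw [← SimpleGraph.dist_eq_one_iff_adj] at hadj
    omega
  · have he : f i = g i := Fin.ext h
    rw [he, SimpleGraph.dist_self] at h2
    omega
  · have hadj : (SimpleGraph.pathGraph n).Adj (f i) (g i) :=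
      SimpleGraph.pathGraph_adj.mpr (Or.inr (by omega))
    rw [← SimpleGraph.dist_eq_one_iff_adj] at hadj
    omega

lemma mdist_eq_one (hn : 2 ≤ n) {l : ℕ} {f g : Fin l → Fin n}
    (hne : ∀ i, f i ≠ g i) (hadj : ∃ i, (SimpleGraph.pathGraph n).Adj (f i) (g i)) :
    mDist (SimpleGraph.pathGraph n) f g = 1 := by
  obtain ⟨i0, hi0⟩ := hadj
  have h1 : (1 : ℕ) ∈ {d | ∃ i : Fin l, (SimpleGraph.pathGraph n).dist (f i) (g i) = d} :=
    ⟨i0, SimpleGraph.dist_eq_one_iff_adj.mpr hi0⟩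
  have hle : mDist (SimpleGraph.pathGraph n) f g ≤ 1 := Nat.sInf_le h1
  have hne0 : mDist (SimpleGraph.pathGraph n) f g ≠ 0 := by
    show sInf {d | ∃ i : Fin l, (SimpleGraph.pathGraph n).dist (f i) (g i) = d} ≠ 0
    intro h0
    rw [Nat.sInf_eq_zero] at h0
    rcases h0 with ⟨i, hi⟩ | h
    · exact hne i (((conn hn).dist_eq_zero_iff).mp hi)
    · rw [Set.eq_empty_iff_forall_notMem] at h
      exact h 1 h1
  omega

/-- conversions -/
lemma track_lazy {l : ℕ} {f : Fin l → Fin n} (h : IsTrack (SimpleGraph.pathGraph n) f) :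
    IsLazyTrack (SimpleGraph.pathGraph n) f :=
  ⟨h.1, fun i hi => Or.inl (h.2 i hi)⟩

lemma sweep_lazy {l : ℕ} {f : Fin l → Fin n} (h : IsSweep (SimpleGraph.pathGraph n) f) :
    IsLazySweep (SimpleGraph.pathGraph n) f :=
  ⟨track_lazy h.1, h.2⟩

/-- the even construction -/
def fE : Fin n → Fin n := fun i => i

def gE : Fin n → Fin n := fun i => ⟨n - 1 - i.val, by have := i.isLt; omega⟩

lemma sweep_fE (hn : 2 ≤ n) : IsSweep (SimpleGraph.pathGraph n) (fE (n := n)) := by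
  refine ⟨⟨fun b => ⟨b, rfl⟩, fun i hi => ?_⟩, fun e he => ?_⟩
  · exact SimpleGraph.pathGraph_adj.mpr (Or.inl rfl)
  · induction e using Sym2.ind with
    | _ u v =>
      rw [SimpleGraph.mem_edgeSet, SimpleGraph.pathGraph_adj] at he
      rcases he with h | h
      · refine ⟨u.val, by omega, ?_⟩
        have hv : v = ⟨u.val + 1, by omega⟩ := Fin.ext h.symm
        exact congrArg (fun x => s(u, x)) hv
      · refine ⟨v.val, by omega, ?_⟩
        have hu : u = ⟨v.val + 1, by omega⟩ := Fin.ext h.symm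
        rw [Sym2.eq_swap]
        exact congrArg (fun x => s(v, x)) hu

lemma sweep_gE (hn : 2 ≤ n) : IsSweep (SimpleGraph.pathGraph n) (gE (n := n)) := by
  refine ⟨⟨fun b => ?_, fun i hi => ?_⟩, fun e he => ?_⟩
  · refine ⟨⟨n - 1 - b.val, by have := b.isLt; omega⟩, ?_⟩
    have := b.isLt
    apply Fin.ext
    show n - 1 - (n - 1 - b.val) = b.val
    omega
  · apply SimpleGraph.pathGraph_adj.mpr
    apply Or.inr
    show (n - 1 - (i + 1)) + 1 = n - 1 - i
    omega
  · induction e using Sym2.ind with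
    | _ u v =>
      rw [SimpleGraph.mem_edgeSet, SimpleGraph.pathGraph_adj] at he
      rcases he with h | h
      · refine ⟨n - 1 - v.val, by have := v.isLt; omega, ?_⟩
        have hb := v.isLt
        have hv : v = gE ⟨n - 1 - v.val, by omega⟩ := by
          apply Fin.ext; show v.val = n - 1 - (n - 1 - v.val); omega
        have hu : u = gE ⟨n - 1 - v.val + 1, by omega⟩ := by
          apply Fin.ext; show u.val = n - 1 - (n - 1 - v.val + 1); omega
        rw [Sym2.eq_swap]
        rw [← hv, ← hu]
      · refine ⟨n - 1 - u.val, by have := u.isLt; omega, ?_⟩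
        have hb := u.isLt
        have hu : u = gE ⟨n - 1 - u.val, by omega⟩ := by
          apply Fin.ext; show u.val = n - 1 - (n - 1 - u.val); omega
        have hv : v = gE ⟨n - 1 - u.val + 1, by omega⟩ := by
          apply Fin.ext; show v.val = n - 1 - (n - 1 - u.val + 1); omega
        rw [← hu, ← hv]

lemma even_pair (hn : 2 ≤ n) (he : Even n) :
    ∃ f g : Fin n → Fin n, IsSweep (SimpleGraph.pathGraph n) f ∧
      IsSweep (SimpleGraph.pathGraph n) g ∧ mDist (SimpleGraph.pathGraph n) f g = 1 := by
  have hmod : n % 2 = 0 := Nat.even_iff.mp he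
  refine ⟨fE, gE, sweep_fE hn, sweep_gE hn, mdist_eq_one hn ?_ ?_⟩
  · intro i hcon
    have := congrArg Fin.val hcon
    have hi := i.isLt
    have : i.val = n - 1 - i.val := this
    omega
  · refine ⟨⟨n / 2, by omega⟩, SimpleGraph.pathGraph_adj.mpr (Or.inr ?_)⟩
    show (n - 1 - n / 2) + 1 = n / 2
    omega

/-- the generic (odd) construction of length n + 1 -/
def fO (hn : 2 ≤ n) : Fin (n + 1) → Fin n := fun i =>
  if h : (i : ℕ) < n then ⟨i, h⟩ else ⟨n - 2, by omega⟩

def gO (hn : 2 ≤ n) : Fin (n + 1) → Fin n := fun i =>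
  if (i : ℕ) = 0 then ⟨1, by omega⟩ else ⟨(i : ℕ) - 1, by have := i.isLt; omega⟩

lemma fO_val (hn : 2 ≤ n) (i : Fin (n + 1)) :
    (fO hn i).val = if (i : ℕ) < n then (i : ℕ) else n - 2 := by
  unfold fO; split <;> rfl

lemma gO_val (hn : 2 ≤ n) (i : Fin (n + 1)) :
    (gO hn i).val = if (i : ℕ) = 0 then 1 else (i : ℕ) - 1 := by
  unfold gO; split <;> rfl

lemma sweep_fO (hn : 2 ≤ n) : IsSweep (SimpleGraph.pathGraph n) (fO hn) := by
  refine ⟨⟨fun b => ?_, fun i hi => ?_⟩, fun e he => ?_⟩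
  · refine ⟨⟨b.val, by have := b.isLt; omega⟩, ?_⟩
    apply Fin.ext
    rw [fO_val]
    have := b.isLt
    simp only [if_pos (show ((⟨b.val, by omega⟩ : Fin (n+1)) : ℕ) < n from this)]
  · apply SimpleGraph.pathGraph_adj.mpr
    rw [fO_val, fO_val]
    show (if i < n then i else n - 2) + 1 = (if i + 1 < n then i + 1 else n - 2) ∨
      (if i + 1 < n then i + 1 else n - 2) + 1 = (if i < n then i else n - 2)
    have hi' : i + 1 < n + 1 := hi
    split <;> split <;> omega
  · induction e using Sym2.ind with
    | _ u v =>
      rw [SimpleGraph.mem_edgeSet, SimpleGraph.pathGraph_adj] at he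
      have hub := u.isLt
      have hvb := v.isLt
      rcases he with h | h
      · refine ⟨u.val, by omega, ?_⟩
        have hu : u = fO hn ⟨u.val, by omega⟩ := by
          apply Fin.ext; rw [fO_val]; show u.val = if u.val < n then u.val else n - 2
          rw [if_pos hub]
        have hv : v = fO hn ⟨u.val + 1, by omega⟩ := by
          apply Fin.ext; rw [fO_val]
          show v.val = if u.val + 1 < n then u.val + 1 else n - 2
          rw [if_pos (by omega)]; omega
        rw [← hu, ← hv]
      · refine ⟨v.val, by omega, ?_⟩
        have hv : v = fO hn ⟨v.val, by omega⟩ := by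
          apply Fin.ext; rw [fO_val]; show v.val = if v.val < n then v.val else n - 2
          rw [if_pos hvb]
        have hu : u = fO hn ⟨v.val + 1, by omega⟩ := by
          apply Fin.ext; rw [fO_val]
          show u.val = if v.val + 1 < n then v.val + 1 else n - 2
          rw [if_pos (by omega)]; omega
        rw [Sym2.eq_swap, ← hv, ← hu]

lemma sweep_gO (hn : 2 ≤ n) : IsSweep (SimpleGraph.pathGraph n) (gO hn) := by
  refine ⟨⟨fun b => ?_, fun i hi => ?_⟩, fun e he => ?_⟩
  · have hb := b.isLt
    by_cases h0 : b.val = 0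
    · refine ⟨⟨1, by omega⟩, ?_⟩
      apply Fin.ext
      rw [gO_val]
      show (if (1 : ℕ) = 0 then 1 else 1 - 1) = b.val
      rw [if_neg (by omega)]; omega
    · refine ⟨⟨b.val + 1, by omega⟩, ?_⟩
      apply Fin.ext
      rw [gO_val]
      show (if b.val + 1 = 0 then 1 else b.val + 1 - 1) = b.val
      rw [if_neg (by omega)]
      omega
  · apply SimpleGraph.pathGraph_adj.mpr
    rw [gO_val, gO_val]
    show (if i = 0 then 1 else i - 1) + 1 = (if i + 1 = 0 then 1 else i + 1 - 1) ∨
      (if i + 1 = 0 then 1 else i + 1 - 1) + 1 = (if i = 0 then 1 else i - 1)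
    split <;> split <;> omega
  · induction e using Sym2.ind with
    | _ u v =>
      rw [SimpleGraph.mem_edgeSet, SimpleGraph.pathGraph_adj] at he
      have hub := u.isLt
      have hvb := v.isLt
      rcases he with h | h
      · refine ⟨u.val + 1, by omega, ?_⟩
        have hu : u = gO hn ⟨u.val + 1, by omega⟩ := by
          apply Fin.ext; rw [gO_val]
          show u.val = if u.val + 1 = 0 then 1 else u.val + 1 - 1
          rw [if_neg (by omega)]
          omega
        have hv : v = gO hn ⟨u.val + 1 + 1, by omega⟩ := by
          apply Fin.ext; rw [gO_val]
          show v.val = if u.val + 1 + 1 = 0 then 1 else u.val + 1 + 1 - 1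
          rw [if_neg (by omega)]; omega
        rw [← hu, ← hv]
      · refine ⟨v.val + 1, by omega, ?_⟩
        have hv : v = gO hn ⟨v.val + 1, by omega⟩ := by
          apply Fin.ext; rw [gO_val]
          show v.val = if v.val + 1 = 0 then 1 else v.val + 1 - 1
          rw [if_neg (by omega)]
          omega
        have hu : u = gO hn ⟨v.val + 1 + 1, by omega⟩ := by
          apply Fin.ext; rw [gO_val]
          show u.val = if v.val + 1 + 1 = 0 then 1 else v.val + 1 + 1 - 1
          rw [if_neg (by omega)]; omega
        rw [Sym2.eq_swap, ← hv, ← hu]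

lemma odd_pair (hn : 2 ≤ n) :
    ∃ f g : Fin (n + 1) → Fin n, IsSweep (SimpleGraph.pathGraph n) f ∧
      IsSweep (SimpleGraph.pathGraph n) g ∧ mDist (SimpleGraph.pathGraph n) f g = 1 := by
  refine ⟨fO hn, gO hn, sweep_fO hn, sweep_gO hn, mdist_eq_one hn ?_ ?_⟩
  · intro i hcon
    have hv := congrArg Fin.val hcon
    rw [fO_val, gO_val] at hv
    have hb := i.isLt
    split_ifs at hv <;> omega
  · refine ⟨⟨0, by omega⟩, SimpleGraph.pathGraph_adj.mpr (Or.inl ?_)⟩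
    rw [fO_val, gO_val]
    show (if (0 : ℕ) < n then 0 else n - 2) + 1 = if (0 : ℕ) = 0 then 1 else 0 - 1
    rw [if_pos (by omega), if_pos rfl]

lemma steps_real {l : ℕ} {f : Fin l → Fin n} (hf : IsLazyTrack (SimpleGraph.pathGraph n) f)
    (hfi : Function.Injective f) (i : ℕ) (hi : i + 1 < l) :
    (f ⟨i, Nat.lt_of_succ_lt hi⟩).val + 1 = (f ⟨i + 1, hi⟩).val ∨
      (f ⟨i + 1, hi⟩).val + 1 = (f ⟨i, Nat.lt_of_succ_lt hi⟩).val := by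
  rcases hf.2 i hi with h | h
  · exact SimpleGraph.pathGraph_adj.mp h
  · have h2 : i = i + 1 := congrArg Fin.val (hfi h)
    omega

lemma structure_of_inj (hn : 2 ≤ n) {f : Fin n → Fin n}
    (hf : IsLazyTrack (SimpleGraph.pathGraph n) f) (hfi : Function.Injective f) :
    (∀ i : Fin n, (f i).val = i.val) ∨ (∀ i : Fin n, (f i).val = n - 1 - i.val) := by
  have h0n : 0 < n := by omega
  have h01 : 0 + 1 < n := by omega
  rcases steps_real hf hfi 0 h01 with hup | hdown
  · left
    have hstep : ∀ i : ℕ, ∀ hi : i + 1 < n,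
        (f ⟨i, Nat.lt_of_succ_lt hi⟩).val + 1 = (f ⟨i + 1, hi⟩).val := by
      intro i
      induction i with
      | zero => intro hi; exact hup
      | succ k ih =>
        intro hi
        have hk1 : k + 1 < n := Nat.lt_of_succ_lt hi
        have ihk := ih hk1
        rcases steps_real hf hfi (k + 1) hi with h | h
        · exact h
        · exfalso
          have hvv : (f ⟨k + 1 + 1, hi⟩).val = (f ⟨k, Nat.lt_of_succ_lt hk1⟩).val := by
            have e : (⟨k + 1, Nat.lt_of_succ_lt hi⟩ : Fin n) = ⟨k + 1, hk1⟩ := rfl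
            rw [e] at h
            omega
          have h3 : k + 1 + 1 = k := congrArg Fin.val (hfi (Fin.ext hvv))
          omega
    have hval : ∀ i : ℕ, ∀ hi : i < n, (f ⟨i, hi⟩).val = (f ⟨0, h0n⟩).val + i := by
      intro i
      induction i with
      | zero => intro hi; rfl
      | succ k ih =>
        intro hi
        have hs := hstep k hi
        have ihk := ih (Nat.lt_of_succ_lt hi)
        omega
    have hn1 : n - 1 < n := by omega
    have hlast : (f ⟨n - 1, hn1⟩).val = (f ⟨0, h0n⟩).val + (n - 1) := hval (n - 1) hn1
    have hb := (f ⟨n - 1, hn1⟩).isLt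
    intro i
    have h2 : (f i).val = (f ⟨0, h0n⟩).val + i.val := hval i.val i.isLt
    omega
  · right
    have hstep : ∀ i : ℕ, ∀ hi : i + 1 < n,
        (f ⟨i + 1, hi⟩).val + 1 = (f ⟨i, Nat.lt_of_succ_lt hi⟩).val := by
      intro i
      induction i with
      | zero => intro hi; exact hdown
      | succ k ih =>
        intro hi
        have hk1 : k + 1 < n := Nat.lt_of_succ_lt hi
        have ihk := ih hk1
        rcases steps_real hf hfi (k + 1) hi with h | h
        · exfalso
          have hvv : (f ⟨k + 1 + 1, hi⟩).val = (f ⟨k, Nat.lt_of_succ_lt hk1⟩).val := by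
            have e : (⟨k + 1, Nat.lt_of_succ_lt hi⟩ : Fin n) = ⟨k + 1, hk1⟩ := rfl
            rw [e] at h
            omega
          have h3 : k + 1 + 1 = k := congrArg Fin.val (hfi (Fin.ext hvv))
          omega
        · exact h
    have hval : ∀ i : ℕ, ∀ hi : i < n, (f ⟨i, hi⟩).val + i = (f ⟨0, h0n⟩).val := by
      intro i
      induction i with
      | zero => intro hi; rfl
      | succ k ih =>
        intro hi
        have hs := hstep k hi
        have ihk := ih (Nat.lt_of_succ_lt hi)
        omega
    obtain ⟨j, hj⟩ := hf.1 ⟨n - 1, by omega⟩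
    have hjj : (f j).val + j.val = (f ⟨0, h0n⟩).val := hval j.val j.isLt
    have hjv : (f j).val = n - 1 := by rw [hj]
    have hb := (f ⟨0, h0n⟩).isLt
    intro i
    have h2 : (f i).val + i.val = (f ⟨0, h0n⟩).val := hval i.val i.isLt
    omega

lemma no_len_n (hn : 2 ≤ n) (ho : ¬ Even n) {f g : Fin n → Fin n}
    (hf : IsLazyTrack (SimpleGraph.pathGraph n) f) (hg : IsLazyTrack (SimpleGraph.pathGraph n) g)
    (hm : mDist (SimpleGraph.pathGraph n) f g = 1) : False := by
  have hfi : Function.Injective f :=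
    ((Fintype.bijective_iff_surjective_and_card f).mpr ⟨hf.1, rfl⟩).injective
  have hgi : Function.Injective g :=
    ((Fintype.bijective_iff_surjective_and_card g).mpr ⟨hg.1, rfl⟩).injective
  have hne : ∀ i : Fin n, f i ≠ g i := by
    intro i h
    have h0 : mDist (SimpleGraph.pathGraph n) f g ≤ 0 :=
      Nat.sInf_le ⟨i, by rw [h, SimpleGraph.dist_self]⟩
    omega
  have hmod : n % 2 = 1 := by
    rw [Nat.even_iff] at ho; omega
  have hmid : (n - 1) / 2 < n := by omega
  have hvmk : ((⟨(n - 1) / 2, hmid⟩ : Fin n)).val = (n - 1) / 2 := rfl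
  rcases structure_of_inj hn hf hfi with h1 | h1 <;>
    rcases structure_of_inj hn hg hgi with h2 | h2 <;>
    · apply hne ⟨(n - 1) / 2, hmid⟩
      apply Fin.ext
      rw [h1 _, h2 _] <;> rw [hvmk] <;> omega

lemma span_eq_one (hn : 2 ≤ n) (Q : ∀ l : ℕ, (Fin l → Fin n) → Prop)
    (hlaz : ∀ l (f : Fin l → Fin n), Q l f → IsLazyTrack (SimpleGraph.pathGraph n) f)
    (hex : ∀ l (f : Fin l → Fin n), IsSweep (SimpleGraph.pathGraph n) f → Q l f) :
    sSup {d | ∃ (l : ℕ) (f g : Fin l → Fin n),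
        Q l f ∧ Q l g ∧ mDist (SimpleGraph.pathGraph n) f g = d} = 1 := by
  obtain ⟨f, g, hf, hg, hm⟩ := odd_pair hn
  have h1 : (1 : ℕ) ∈ {d | ∃ (l : ℕ) (f g : Fin l → Fin n),
      Q l f ∧ Q l g ∧ mDist (SimpleGraph.pathGraph n) f g = d} :=
    ⟨n + 1, f, g, hex _ _ hf, hex _ _ hg, hm⟩
  have hub : ∀ d ∈ {d | ∃ (l : ℕ) (f g : Fin l → Fin n),
      Q l f ∧ Q l g ∧ mDist (SimpleGraph.pathGraph n) f g = d}, d ≤ 1 := by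
    rintro d ⟨l, f, g, hf, hg, rfl⟩
    exact mdist_le_one hn (hlaz _ _ hf) (hlaz _ _ hg)
  exact le_antisymm (csSup_le ⟨1, h1⟩ hub) (le_csSup ⟨1, hub⟩ h1)

lemma L_eq (hn : 2 ≤ n) (Q : ∀ l : ℕ, (Fin l → Fin n) → Prop)
    (hlaz : ∀ l (f : Fin l → Fin n), Q l f → IsLazyTrack (SimpleGraph.pathGraph n) f)
    (hex : ∀ l (f : Fin l → Fin n), IsSweep (SimpleGraph.pathGraph n) f → Q l f) :
    sInf {l | ∃ f g : Fin l → Fin n, Q l f ∧ Q l g ∧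
        mDist (SimpleGraph.pathGraph n) f g =
          sSup {d | ∃ (l : ℕ) (f g : Fin l → Fin n),
            Q l f ∧ Q l g ∧ mDist (SimpleGraph.pathGraph n) f g = d}} =
      if Even n then n else n + 1 := by
  rw [span_eq_one hn Q hlaz hex]
  set S : Set ℕ := {l | ∃ f g : Fin l → Fin n,
    Q l f ∧ Q l g ∧ mDist (SimpleGraph.pathGraph n) f g = 1} with hS
  have hge : ∀ l ∈ S, n ≤ l := by
    rintro l ⟨f, g, hf, hg, hm⟩
    have hsurj := (hlaz _ _ hf).1
    have := Fintype.card_le_of_surjective f hsurj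
    simpa using this
  by_cases he : Even n
  · rw [if_pos he]
    obtain ⟨f, g, hf, hg, hm⟩ := even_pair hn he
    have hmem : n ∈ S := ⟨f, g, hex _ _ hf, hex _ _ hg, hm⟩
    exact le_antisymm (Nat.sInf_le hmem) (hge _ (Nat.sInf_mem ⟨n, hmem⟩))
  · rw [if_neg he]
    obtain ⟨f, g, hf, hg, hm⟩ := odd_pair hn
    have hmem : n + 1 ∈ S := ⟨f, g, hex _ _ hf, hex _ _ hg, hm⟩
    have hnot : n ∉ S := by
      rintro ⟨f, g, hf, hg, hm⟩
      exact no_len_n hn he (hlaz _ _ hf) (hlaz _ _ hg) hm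
    have hsmem := Nat.sInf_mem (⟨n + 1, hmem⟩ : S.Nonempty)
    have hge2 := hge _ hsmem
    have hle := Nat.sInf_le hmem
    rcases Nat.eq_or_lt_of_le hge2 with h | h
    · exact absurd (h ▸ hsmem) hnot
    · omega

end StmtAux

open StmtAux in
theorem stmt12 (n : ℕ) (hn : 2 ≤ n) :
    strongVertexL (SimpleGraph.pathGraph n) = (if Even n then n else n + 1) ∧
      directVertexL (SimpleGraph.pathGraph n) = (if Even n then n else n + 1) ∧
        strongEdgeL (SimpleGraph.pathGraph n) = (if Even n then n else n + 1) ∧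
          directEdgeL (SimpleGraph.pathGraph n) = (if Even n then n else n + 1) := by
  refine ⟨?_, ?_, ?_, ?_⟩
  · exact StmtAux.L_eq hn (fun l f => IsLazyTrack (SimpleGraph.pathGraph n) f)
      (fun _ _ h => h) (fun _ _ h => StmtAux.track_lazy h.1)
  · exact StmtAux.L_eq hn (fun l f => IsTrack (SimpleGraph.pathGraph n) f)
      (fun _ _ h => StmtAux.track_lazy h) (fun _ _ h => h.1)
  · exact StmtAux.L_eq hn (fun l f => IsLazySweep (SimpleGraph.pathGraph n) f)
      (fun _ _ h => h.1) (fun _ _ h => StmtAux.sweep_lazy h)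
  · exact StmtAux.L_eq hn (fun l f => IsSweep (SimpleGraph.pathGraph n) f)
      (fun _ _ h => StmtAux.track_lazy h.1) (fun _ _ h => h)
end

section
/- For the path P_n on n ≥ 2 vertices, L□_V(P_n)=L□_E(P_n)=2n−1. -/
open SimpleGraph

section Aux

open SimpleGraph

/-- A surjective lazy walk on `Fin n` makes at least `n-1` moves. -/
private lemma aux_moves_card {n l : ℕ} (f : Fin l → Fin n) (hsurj : Function.Surjective f)
    (hl : 0 < l) :
    n - 1 ≤ ((Finset.range (l - 1)).filter
      (fun i => ∃ hi : i + 1 < l, f ⟨i, Nat.lt_of_succ_lt hi⟩ ≠ f ⟨i + 1, hi⟩)).card := by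
  classical
  have hex : ∀ v : Fin n, ∃ t : ℕ, ∃ ht : t < l, f ⟨t, ht⟩ = v := by
    intro v
    obtain ⟨i, hi⟩ := hsurj v
    exact ⟨i.val, i.isLt, by simpa using hi⟩
  set φ : Fin n → ℕ := fun v => Nat.find (hex v) - 1 with hφ
  have hφv : ∀ v, φ v = Nat.find (hex v) - 1 := fun v => rfl
  have hpos : ∀ v : Fin n, v ≠ f ⟨0, hl⟩ → 0 < Nat.find (hex v) := by
    intro v hv
    rcases Nat.eq_zero_or_pos (Nat.find (hex v)) with h0 | h
    · obtain ⟨ht, hft⟩ := Nat.find_spec (hex v)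
      exfalso
      apply hv
      rw [← hft]
      congr 1
      exact Fin.ext (by simp [h0])
    · exact h
  have hmem : ∀ v ∈ Finset.univ.erase (f ⟨0, hl⟩),
      φ v ∈ (Finset.range (l - 1)).filter
        (fun i => ∃ hi : i + 1 < l, f ⟨i, Nat.lt_of_succ_lt hi⟩ ≠ f ⟨i + 1, hi⟩) := by
    intro v hv
    have hv' : v ≠ f ⟨0, hl⟩ := Finset.ne_of_mem_erase hv
    obtain ⟨ht, hft⟩ := Nat.find_spec (hex v)
    have h1 : 0 < Nat.find (hex v) := hpos v hv'
    have hlt : Nat.find (hex v) < l := ht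
    rw [Finset.mem_filter, Finset.mem_range]
    have he1 : φ v = Nat.find (hex v) - 1 := hφv v
    have hs1 : φ v + 1 < l := by omega
    have hs0 : φ v < l := by omega
    refine ⟨by omega, hs1, ?_⟩
    intro hcontra
    have hidx : (⟨φ v + 1, hs1⟩ : Fin l) = ⟨Nat.find (hex v), ht⟩ := Fin.ext (by simp; try omega)
    have hv1 : f ⟨φ v + 1, hs1⟩ = v := by rw [hidx]; exact hft
    have hv0 : f ⟨φ v, hs0⟩ = v := Eq.trans hcontra hv1
    have hmin := Nat.find_min (hex v) (m := φ v) (by omega)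
    exact hmin ⟨hs0, hv0⟩
  have hinj : Set.InjOn φ ↑(Finset.univ.erase (f ⟨0, hl⟩)) := by
    intro v hv w hw hvw
    have hv' : v ≠ f ⟨0, hl⟩ := by simpa using hv
    have hw' : w ≠ f ⟨0, hl⟩ := by simpa using hw
    have h1 := hpos v hv'
    have h2 := hpos w hw'
    have heq : Nat.find (hex v) = Nat.find (hex w) := by
      rw [hφv, hφv] at hvw; omega
    obtain ⟨htv, hfv⟩ := Nat.find_spec (hex v)
    obtain ⟨htw, hfw⟩ := Nat.find_spec (hex w)
    rw [← hfv, ← hfw]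
    congr 1
    exact Fin.ext (by simp [heq])
  have hcard := Finset.card_le_card_of_injOn φ hmem hinj
  have : (Finset.univ.erase (f ⟨0, hl⟩)).card = n - 1 := by
    rw [Finset.card_erase_of_mem (Finset.mem_univ _), Finset.card_univ, Fintype.card_fin]
  omega

/-- Opposite lazy tracks on `pathGraph n` need length at least `2n-1`. -/
private lemma aux_len {n l : ℕ} (hn : 2 ≤ n) {f g : Fin l → Fin n}
    (hf : IsLazyTrack (pathGraph n) f) (hg : IsLazyTrack (pathGraph n) g)
    (hop : IsOpposite (pathGraph n) f g) : 2 * n - 1 ≤ l := by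
  classical
  have hl : 0 < l := by
    by_contra h
    obtain ⟨i, -⟩ := hf.1 ⟨0, by omega⟩
    exact absurd i.isLt (by omega)
  set Mf := (Finset.range (l - 1)).filter
      (fun i => ∃ hi : i + 1 < l, f ⟨i, Nat.lt_of_succ_lt hi⟩ ≠ f ⟨i + 1, hi⟩) with hMf
  set Mg := (Finset.range (l - 1)).filter
      (fun i => ∃ hi : i + 1 < l, g ⟨i, Nat.lt_of_succ_lt hi⟩ ≠ g ⟨i + 1, hi⟩) with hMg
  have h1 : n - 1 ≤ Mf.card := aux_moves_card f hf.1 hl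
  have h2 : n - 1 ≤ Mg.card := aux_moves_card g hg.1 hl
  have hdisj : Disjoint Mf Mg := by
    rw [Finset.disjoint_left]
    intro i hif hig
    rw [hMf, Finset.mem_filter] at hif
    rw [hMg, Finset.mem_filter] at hig
    obtain ⟨-, hi, hne⟩ := hif
    obtain ⟨-, hi2, hne2⟩ := hig
    have hadj := (hf.2 i hi).resolve_right hne
    exact hne2 ((hop i hi).mp hadj)
  have hsub : Mf ∪ Mg ⊆ Finset.range (l - 1) := by
    intro i hi
    rw [Finset.mem_union, hMf, hMg, Finset.mem_filter, Finset.mem_filter] at hi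
    rcases hi with ⟨h, -⟩ | ⟨h, -⟩ <;> exact h
  have hcard : Mf.card + Mg.card ≤ l - 1 := by
    have := Finset.card_le_card hsub
    rw [Finset.card_union_of_disjoint hdisj] at this
    simpa using this
  omega

/-- Opposite lazy tracks on a path must meet. -/
private lemma aux_meet {n l : ℕ} (hn : 1 ≤ n) {f g : Fin l → Fin n}
    (hf : IsLazyTrack (pathGraph n) f) (hg : IsLazyTrack (pathGraph n) g)
    (hop : IsOpposite (pathGraph n) f g) : ∃ i : Fin l, f i = g i := by
  classical
  have hl : 0 < l := by
    by_contra h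
    obtain ⟨i, -⟩ := hf.1 ⟨0, by omega⟩
    exact absurd i.isLt (by omega)
  by_contra hc
  push_neg at hc
  set F : ℕ → ℕ := fun i => if h : i < l then (f ⟨i, h⟩).val else 0 with hF
  set G : ℕ → ℕ := fun i => if h : i < l then (g ⟨i, h⟩).val else 0 with hG
  have hFeq : ∀ i (h : i < l), F i = (f ⟨i, h⟩).val := by
    intro i h; simp only [hF]; rw [dif_pos h]
  have hGeq : ∀ i (h : i < l), G i = (g ⟨i, h⟩).val := by
    intro i h; simp only [hG]; rw [dif_pos h]
  have hne : ∀ i, i < l → F i ≠ G i := by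
    intro i h hEq
    rw [hFeq i h, hGeq i h] at hEq
    exact hc ⟨i, h⟩ (Fin.ext hEq)
  have hFn : ∀ i, i < l → F i < n := by
    intro i h; rw [hFeq i h]; exact (f ⟨i, h⟩).isLt
  have hGn : ∀ i, i < l → G i < n := by
    intro i h; rw [hGeq i h]; exact (g ⟨i, h⟩).isLt
  have hstep : ∀ i, i + 1 < l →
      ((F (i + 1) = F i + 1 ∨ F i = F (i + 1) + 1) ∧ G (i + 1) = G i) ∨
      ((G (i + 1) = G i + 1 ∨ G i = G (i + 1) + 1) ∧ F (i + 1) = F i) := by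
    intro i h
    rcases hf.2 i h with hadj | heq
    · left
      have hgeq := (hop i h).mp hadj
      rw [pathGraph_adj] at hadj
      rw [← hFeq i (Nat.lt_of_succ_lt h), ← hFeq (i + 1) h] at hadj
      have hg2 : G i = G (i + 1) := by
        rw [hGeq i (Nat.lt_of_succ_lt h), hGeq (i + 1) h, hgeq]
      exact ⟨by omega, by omega⟩
    · right
      have hnadj : ¬ (pathGraph n).Adj (f ⟨i, Nat.lt_of_succ_lt h⟩) (f ⟨i + 1, h⟩) := by
        rw [heq]; exact (pathGraph n).irrefl
      have hgne : g ⟨i, Nat.lt_of_succ_lt h⟩ ≠ g ⟨i + 1, h⟩ :=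
        fun he => hnadj ((hop i h).mpr he)
      have hgadj := (hg.2 i h).resolve_right hgne
      rw [pathGraph_adj] at hgadj
      rw [← hGeq i (Nat.lt_of_succ_lt h), ← hGeq (i + 1) h] at hgadj
      have hf2 : F i = F (i + 1) := by
        rw [hFeq i (Nat.lt_of_succ_lt h), hFeq (i + 1) h, heq]
      exact ⟨by omega, by omega⟩
  have hsign : ∀ i, i < l → (G i < F i ↔ G 0 < F 0) := by
    intro i
    induction i with
    | zero => intro _; exact Iff.rfl
    | succ k ih =>
      intro h
      have hk : k < l := by omega
      have hih := ih hk
      have hs := hstep k (by omega)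
      have hn1 := hne k hk
      have hn2 := hne (k + 1) h
      omega
  rcases Nat.lt_or_ge (G 0) (F 0) with hcase | hcase
  · obtain ⟨j, hj⟩ := hg.1 ⟨n - 1, by omega⟩
    have hGj : G j.val = n - 1 := by
      rw [hGeq j.val j.isLt]
      exact congrArg Fin.val hj
    have hs := (hsign j.val j.isLt).mpr hcase
    have hFb := hFn j.val j.isLt
    omega
  · obtain ⟨j, hj⟩ := hf.1 ⟨n - 1, by omega⟩
    have hFj : F j.val = n - 1 := by
      rw [hFeq j.val j.isLt]
      exact congrArg Fin.val hj
    have hs := hsign j.val j.isLt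
    have hGb := hGn j.val j.isLt
    have hn0 := hne 0 hl
    have hnj := hne j.val j.isLt
    omega

private def fc (n : ℕ) : Fin (2 * n - 1) → Fin n :=
  fun i => ⟨min i.val (n - 1), by have := i.isLt; omega⟩

private def gc (n : ℕ) : Fin (2 * n - 1) → Fin n :=
  fun i => ⟨i.val - (n - 1), by have := i.isLt; omega⟩

private lemma fc_val (n : ℕ) (i : Fin (2 * n - 1)) : (fc n i).val = min i.val (n - 1) := rfl
private lemma gc_val (n : ℕ) (i : Fin (2 * n - 1)) : (gc n i).val = i.val - (n - 1) := rfl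

private lemma aux_con {n : ℕ} (hn : 2 ≤ n) :
    IsLazySweep (pathGraph n) (fc n) ∧ IsLazySweep (pathGraph n) (gc n) ∧
      IsOpposite (pathGraph n) (fc n) (gc n) ∧ mDist (pathGraph n) (fc n) (gc n) = 0 := by
  have hfl : IsLazyTrack (pathGraph n) (fc n) := by
    constructor
    · intro v
      have hv := v.isLt
      refine ⟨⟨v.val, by omega⟩, Fin.ext ?_⟩
      rw [fc_val]
      simp
      try omega
    · intro i hi
      rcases le_or_gt (i + 1) (n - 1) with hc | hc
      · left
        rw [pathGraph_adj, fc_val, fc_val]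
        left
        simp
        try omega
      · right
        apply Fin.ext
        rw [fc_val, fc_val]
        simp
        try omega
  have hgl : IsLazyTrack (pathGraph n) (gc n) := by
    constructor
    · intro v
      have hv := v.isLt
      refine ⟨⟨n - 1 + v.val, by omega⟩, Fin.ext ?_⟩
      rw [gc_val]
      simp
      try omega
    · intro i hi
      rcases le_or_gt (i + 1) (n - 1) with hc | hc
      · right
        apply Fin.ext
        rw [gc_val, gc_val]
        simp
        try omega
      · left
        rw [pathGraph_adj, gc_val, gc_val]
        left
        simp
        try omega
  have hopp : IsOpposite (pathGraph n) (fc n) (gc n) := by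
    intro i hi
    rcases le_or_gt (i + 1) (n - 1) with hc | hc
    · constructor
      · intro _
        apply Fin.ext
        rw [gc_val, gc_val]
        simp
        try omega
      · intro _
        rw [pathGraph_adj, fc_val, fc_val]
        left
        simp
        try omega
    · constructor
      · intro hadj
        rw [pathGraph_adj, fc_val, fc_val] at hadj
        simp at hadj
        omega
      · intro heq
        have := congrArg Fin.val heq
        rw [gc_val, gc_val] at this
        simp at this
        omega
  have hfs : SweepCond (pathGraph n) (fc n) := by
    intro e he
    induction e with
    | h u v =>
      rw [SimpleGraph.mem_edgeSet, pathGraph_adj] at he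
      have hu := u.isLt
      have hv := v.isLt
      rcases he with he | he
      · refine ⟨u.val, by omega, ?_⟩
        have e1 : fc n ⟨u.val, by omega⟩ = u := Fin.ext (by rw [fc_val]; simp; try omega)
        have e2 : fc n ⟨u.val + 1, by omega⟩ = v := Fin.ext (by rw [fc_val]; simp; try omega)
        rw [e1, e2]
      · refine ⟨v.val, by omega, ?_⟩
        have e1 : fc n ⟨v.val, by omega⟩ = v := Fin.ext (by rw [fc_val]; simp; try omega)
        have e2 : fc n ⟨v.val + 1, by omega⟩ = u := Fin.ext (by rw [fc_val]; simp; try omega)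
        rw [e1, e2, Sym2.eq_swap]
  have hgs : SweepCond (pathGraph n) (gc n) := by
    intro e he
    induction e with
    | h u v =>
      rw [SimpleGraph.mem_edgeSet, pathGraph_adj] at he
      have hu := u.isLt
      have hv := v.isLt
      rcases he with he | he
      · refine ⟨n - 1 + u.val, by omega, ?_⟩
        have e1 : gc n ⟨n - 1 + u.val, by omega⟩ = u := Fin.ext (by rw [gc_val]; simp; try omega)
        have e2 : gc n ⟨n - 1 + u.val + 1, by omega⟩ = v := Fin.ext (by rw [gc_val]; simp; try omega)
        rw [e1, e2]
      · refine ⟨n - 1 + v.val, by omega, ?_⟩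
        have e1 : gc n ⟨n - 1 + v.val, by omega⟩ = v := Fin.ext (by rw [gc_val]; simp; try omega)
        have e2 : gc n ⟨n - 1 + v.val + 1, by omega⟩ = u := Fin.ext (by rw [gc_val]; simp; try omega)
        rw [e1, e2, Sym2.eq_swap]
  have hmd : mDist (pathGraph n) (fc n) (gc n) = 0 := by
    have h0 : (0 : ℕ) ∈ {d | ∃ i : Fin (2 * n - 1),
        (pathGraph n).dist (fc n i) (gc n i) = d} := by
      refine ⟨⟨0, by omega⟩, ?_⟩
      have : fc n ⟨0, by omega⟩ = gc n ⟨0, by omega⟩ :=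
        Fin.ext (by rw [fc_val, gc_val]; simp)
      rw [this, SimpleGraph.dist_self]
    exact Nat.le_zero.mp (Nat.sInf_le h0)
  exact ⟨⟨hfl, hfs⟩, ⟨hgl, hgs⟩, hopp, hmd⟩

private lemma span_V {n : ℕ} (hn : 2 ≤ n) : cartesianVertexSpan (pathGraph n) = 0 := by
  obtain ⟨hf, hg, hop, hm⟩ := aux_con hn
  refine le_antisymm (csSup_le ⟨0, 2 * n - 1, fc n, gc n, hf.1, hg.1, hop, hm⟩ ?_) (Nat.zero_le _)
  rintro d ⟨l, f, g, hf', hg', hop', rfl⟩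
  obtain ⟨i, hi⟩ := aux_meet (by omega) hf' hg' hop'
  have h0 : (0 : ℕ) ∈ {d | ∃ i : Fin l, (pathGraph n).dist (f i) (g i) = d} :=
    ⟨i, by rw [hi, SimpleGraph.dist_self]⟩
  exact Nat.sInf_le h0

private lemma span_E {n : ℕ} (hn : 2 ≤ n) : cartesianEdgeSpan (pathGraph n) = 0 := by
  obtain ⟨hf, hg, hop, hm⟩ := aux_con hn
  refine le_antisymm (csSup_le ⟨0, 2 * n - 1, fc n, gc n, hf, hg, hop, hm⟩ ?_) (Nat.zero_le _)
  rintro d ⟨l, f, g, hf', hg', hop', rfl⟩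
  obtain ⟨i, hi⟩ := aux_meet (by omega) hf'.1 hg'.1 hop'
  have h0 : (0 : ℕ) ∈ {d | ∃ i : Fin l, (pathGraph n).dist (f i) (g i) = d} :=
    ⟨i, by rw [hi, SimpleGraph.dist_self]⟩
  exact Nat.sInf_le h0

end Aux

theorem stmt13 (n : ℕ) (hn : 2 ≤ n) :
    cartesianVertexL (SimpleGraph.pathGraph n) = 2 * n - 1 ∧
      cartesianEdgeL (SimpleGraph.pathGraph n) = 2 * n - 1 := by
  obtain ⟨hf, hg, hop, hm⟩ := aux_con hn
  constructor
  · have hmemV : (2 * n - 1) ∈ {l | ∃ f g : Fin l → Fin n,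
        IsLazyTrack (pathGraph n) f ∧ IsLazyTrack (pathGraph n) g ∧
          IsOpposite (pathGraph n) f g ∧
          mDist (pathGraph n) f g = cartesianVertexSpan (pathGraph n)} :=
      ⟨fc n, gc n, hf.1, hg.1, hop, by rw [span_V hn]; exact hm⟩
    refine le_antisymm (Nat.sInf_le hmemV) (le_csInf ⟨_, hmemV⟩ ?_)
    rintro l ⟨f', g', hf', hg', hop', -⟩
    exact aux_len hn hf' hg' hop'
  · have hmemE : (2 * n - 1) ∈ {l | ∃ f g : Fin l → Fin n,
        IsLazySweep (pathGraph n) f ∧ IsLazySweep (pathGraph n) g ∧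
          IsOpposite (pathGraph n) f g ∧
          mDist (pathGraph n) f g = cartesianEdgeSpan (pathGraph n)} :=
      ⟨fc n, gc n, hf, hg, hop, by rw [span_E hn]; exact hm⟩
    refine le_antisymm (Nat.sInf_le hmemE) (le_csInf ⟨_, hmemE⟩ ?_)
    rintro l ⟨f', g', hf', hg', hop', -⟩
    exact aux_len hn hf'.1 hg'.1 hop'
end

section
/- For the cycle C_n on n ≥ 3 vertices, L⊠_V(C_n)=L×_V(C_n)=n. -/
open SimpleGraph

/-! Every pair of tracks has `m_G(f, g) ≤ diam G`, and surjectivity forces every track on a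
finite graph to have length at least `|V|`. Hence if two genuine tracks of length `|V|` stay at
distance `diam G` at all times, they realise both spans and both minimal lengths. On `C_n` the
identity and the rotation by `⌊n/2⌋` are such a pair: the distance on `C_n` is the length of the
shorter arc, so `diam C_n = ⌊n/2⌋`. -/

open scoped Fin.NatCast

section Spans

variable {V : Type*} {G : SimpleGraph V} {l : ℕ} {f g : Fin l → V} {D : ℕ}

theorem IsTrack.isLazyTrack (hf : IsTrack G f) : IsLazyTrack G f :=
  ⟨hf.1, fun i hi => Or.inl (hf.2 i hi)⟩

theorem IsLazyTrack.card_le [Fintype V] (hf : IsLazyTrack G f) : Fintype.card V ≤ l := by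
  simpa using Fintype.card_le_of_surjective f hf.1

theorem mDist_le_of_forall_dist_le (hD : ∀ u v, G.dist u v ≤ D) (f g : Fin l → V) :
    mDist G f g ≤ D := by
  rcases Set.eq_empty_or_nonempty {d | ∃ i : Fin l, G.dist (f i) (g i) = d} with h | h
  · simp [mDist, h]
  · obtain ⟨i, hi⟩ := Nat.sInf_mem h
    rw [mDist, ← hi]
    exact hD _ _

theorem mDist_eq_of_forall_dist_eq [NeZero l] (h : ∀ i, G.dist (f i) (g i) = D) :
    mDist G f g = D := by
  have : {d | ∃ i : Fin l, G.dist (f i) (g i) = d} = {D} := by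
    ext d
    exact ⟨fun ⟨i, hi⟩ => hi ▸ h i, fun hd => ⟨0, hd ▸ h 0⟩⟩
  rw [mDist, this, csInf_singleton]

theorem strongVertexSpan_eq_of_isTrack (hD : ∀ u v, G.dist u v ≤ D) (hf : IsTrack G f)
    (hg : IsTrack G g) (hfg : mDist G f g = D) : strongVertexSpan G = D :=
  IsGreatest.csSup_eq ⟨⟨l, f, g, hf.isLazyTrack, hg.isLazyTrack, hfg⟩,
    by rintro _ ⟨_, f', g', -, -, rfl⟩; exact mDist_le_of_forall_dist_le hD f' g'⟩

theorem directVertexSpan_eq_of_isTrack (hD : ∀ u v, G.dist u v ≤ D) (hf : IsTrack G f)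
    (hg : IsTrack G g) (hfg : mDist G f g = D) : directVertexSpan G = D :=
  IsGreatest.csSup_eq ⟨⟨l, f, g, hf, hg, hfg⟩,
    by rintro _ ⟨_, f', g', -, -, rfl⟩; exact mDist_le_of_forall_dist_le hD f' g'⟩

theorem strongVertexL_eq_of_isTrack [Fintype V] (hD : ∀ u v, G.dist u v ≤ D)
    (hf : IsTrack G f) (hg : IsTrack G g) (hfg : mDist G f g = D) (hl : Fintype.card V = l) :
    strongVertexL G = l :=
  IsLeast.csInf_eq ⟨⟨f, g, hf.isLazyTrack, hg.isLazyTrack,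
      by rw [strongVertexSpan_eq_of_isTrack hD hf hg hfg, hfg]⟩,
    by rintro _ ⟨f', -, hf', -, -⟩; exact hl ▸ hf'.card_le⟩

theorem directVertexL_eq_of_isTrack [Fintype V] (hD : ∀ u v, G.dist u v ≤ D)
    (hf : IsTrack G f) (hg : IsTrack G g) (hfg : mDist G f g = D) (hl : Fintype.card V = l) :
    directVertexL G = l :=
  IsLeast.csInf_eq ⟨⟨f, g, hf, hg, by rw [directVertexSpan_eq_of_isTrack hD hf hg hfg, hfg]⟩,
    by rintro _ ⟨f', -, hf', -, -⟩; exact hl ▸ hf'.isLazyTrack.card_le⟩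

end Spans

theorem SimpleGraph.Walk.le_add_length {V : Type*} {G : SimpleGraph V} {φ : V → ℕ}
    (hφ : ∀ x y, G.Adj x y → φ x ≤ φ y + 1) {u v : V} (p : G.Walk u v) :
    φ u ≤ φ v + p.length := by
  induction p with
  | nil => simp
  | cons h _ ih => have := hφ _ _ h; rw [Walk.length_cons]; omega

theorem SimpleGraph.Reachable.le_add_dist {V : Type*} {G : SimpleGraph V} {φ : V → ℕ}
    (hφ : ∀ x y, G.Adj x y → φ x ≤ φ y + 1) {u v : V} (h : G.Reachable u v) :
    φ u ≤ φ v + G.dist u v := by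
  obtain ⟨p, hp⟩ := h.exists_walk_length_eq_dist
  exact hp ▸ p.le_add_length hφ

namespace Fin

variable {n : ℕ}

def cycNorm (a : Fin n) : ℕ := min a.val (n - a.val)

theorem cycNorm_le_half (a : Fin n) : a.cycNorm ≤ n / 2 := by
  unfold cycNorm; omega

theorem cycNorm_zero : (0 : Fin (n + 1)).cycNorm = 0 := by
  simp [cycNorm]

theorem cycNorm_natCast_half : (((n + 1) / 2 : ℕ) : Fin (n + 1)).cycNorm = (n + 1) / 2 := by
  rw [cycNorm, val_natCast, Nat.mod_eq_of_lt (by omega)]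
  omega

theorem cycNorm_add_one_le (a : Fin (n + 1)) : (a + 1).cycNorm ≤ a.cycNorm + 1 := by
  simp only [cycNorm, val_add_one]
  split_ifs <;> omega

theorem cycNorm_le_cycNorm_add_one (a : Fin (n + 1)) : a.cycNorm ≤ (a + 1).cycNorm + 1 := by
  simp only [cycNorm, val_add_one]
  split_ifs with h
  · rw [h, val_last]; omega
  · omega

end Fin

namespace SimpleGraph

variable {n : ℕ}

theorem cycleGraph_adj_add_one (x : Fin (n + 2)) : (cycleGraph (n + 2)).Adj x (x + 1) := by
  simp [cycleGraph_adj]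

theorem cycleGraph_dist_add_natCast_le (u : Fin (n + 2)) (k : ℕ) :
    (cycleGraph (n + 2)).dist u (u + k) ≤ k := by
  induction k with
  | zero => simp
  | succ k ih =>
    have hstep := dist_eq_one_iff_adj.mpr (cycleGraph_adj_add_one (u + (k : Fin (n + 2))))
    have htri := Connected.dist_triangle (G := cycleGraph (n + 2)) cycleGraph_connected
      (u := u) (v := u + (k : Fin (n + 2))) (w := u + k + 1)
    rw [Nat.cast_succ, ← add_assoc]
    omega

theorem cycleGraph_dist_le_val_sub (u v : Fin (n + 2)) :
    (cycleGraph (n + 2)).dist u v ≤ (v - u).val := by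
  simpa using cycleGraph_dist_add_natCast_le u (v - u).val

theorem cycleGraph_cycNorm_sub_le_dist (u v : Fin (n + 2)) :
    (u - v).cycNorm ≤ (cycleGraph (n + 2)).dist u v := by
  -- `x ↦ cycNorm (x - v)` changes by at most one along each edge and vanishes at `v`.
  have hφ (x y : Fin (n + 2)) (h : (cycleGraph (n + 2)).Adj x y) :
      (x - v).cycNorm ≤ (y - v).cycNorm + 1 := by
    rcases cycleGraph_adj.mp h with h | h
    · rw [show x - v = y - v + 1 by rw [← h]; abel]
      exact (y - v).cycNorm_add_one_le
    · rw [show y - v = x - v + 1 by rw [← h]; abel]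
      exact (x - v).cycNorm_le_cycNorm_add_one
  simpa [Fin.cycNorm_zero] using (cycleGraph_connected u v).le_add_dist hφ

theorem cycleGraph_dist (u v : Fin (n + 2)) :
    (cycleGraph (n + 2)).dist u v = (u - v).cycNorm := by
  refine le_antisymm ?_ (cycleGraph_cycNorm_sub_le_dist u v)
  rcases eq_or_ne u v with rfl | huv
  · simp
  have hsum : (v - u).val = n + 2 - (u - v).val := by
    rw [← neg_sub, Fin.val_neg, if_neg (sub_ne_zero.mpr huv)]
  have h₁ := cycleGraph_dist_le_val_sub u v
  have h₂ := dist_comm (G := cycleGraph (n + 2)) ▸ cycleGraph_dist_le_val_sub v u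
  exact le_min h₂ (hsum ▸ h₁)

theorem cycleGraph_dist_le_half (u v : Fin (n + 2)) :
    (cycleGraph (n + 2)).dist u v ≤ (n + 2) / 2 :=
  cycleGraph_dist u v ▸ Fin.cycNorm_le_half _

theorem cycleGraph_dist_add_half (u : Fin (n + 2)) :
    (cycleGraph (n + 2)).dist (u + ((n + 2) / 2 : ℕ)) u = (n + 2) / 2 := by
  rw [cycleGraph_dist, add_sub_cancel_left, Fin.cycNorm_natCast_half]

theorem isTrack_cycleGraph_add (c : Fin (n + 2)) : IsTrack (cycleGraph (n + 2)) (· + c) := by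
  refine ⟨fun y => ⟨y - c, sub_add_cancel y c⟩, fun i hi => ?_⟩
  rw [show (⟨i + 1, hi⟩ : Fin (n + 2)) = ⟨i, by omega⟩ + 1 from
    Fin.ext (Fin.val_add_one_of_lt' (i := ⟨i, _⟩) hi).symm]
  simpa only [add_right_comm _ 1 c] using cycleGraph_adj_add_one _

theorem mDist_cycleGraph_add_half :
    mDist (cycleGraph (n + 2)) (· + (((n + 2) / 2 : ℕ) : Fin (n + 2))) (· + 0) = (n + 2) / 2 :=
  mDist_eq_of_forall_dist_eq fun i => by rw [add_zero, cycleGraph_dist_add_half]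

end SimpleGraph

theorem stmt14 (n : ℕ) (hn : 3 ≤ n) :
    strongVertexL (SimpleGraph.cycleGraph n) = n ∧
      directVertexL (SimpleGraph.cycleGraph n) = n := by
  obtain ⟨m, rfl⟩ : ∃ m, n = m + 2 := ⟨n - 2, by omega⟩
  have hf := isTrack_cycleGraph_add (((m + 2) / 2 : ℕ) : Fin (m + 2))
  have hg := isTrack_cycleGraph_add (0 : Fin (m + 2))
  exact ⟨strongVertexL_eq_of_isTrack cycleGraph_dist_le_half hf hg mDist_cycleGraph_add_half
      (Fintype.card_fin _),
    directVertexL_eq_of_isTrack cycleGraph_dist_le_half hf hg mDist_cycleGraph_add_half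
      (Fintype.card_fin _)⟩
end

section
/- For the complete graph K_n with n ≥ 2 vertices, L⊠_E(K_n)=L×_E(K_n)=(n²−n+2)/2 if n is odd and =n²/2 if n is even, and L□_E(K_n)=n²−n+1 if n is odd and =n²−1 if n is even. -/
open SimpleGraph

/-! A walk through every edge of `K_n` makes at least `n(n-1)/2` moves. For even `n` every degree
`n - 1` is odd, while a vertex other than the two ends of the walk is entered and left equally
often, so it is incident to at least `n` moves; this forces `n²/2 - 1` moves. At each step exactly
one of two opposite walks moves, so together they need twice as many steps.

Conversely an Eulerian circuit of `K_{2m+1}`, extended for `n = 2m + 2` by the fan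
`b, 1, 2, b, 3, 4, b, …` at the last vertex `b`, attains these bounds; being optimal, it never
stands still. Paired with its image under `v ↦ v + 1` it gives two sweeps that never meet, and
letting each of the two walkers make its move in its own half-step, in the order that avoids a
collision, gives opposite lazy sweeps that never meet for `n ≥ 3`. All distances in `K_n` are at
most `1`, so these pairs attain the spans; in `K_2` opposite walks always meet. -/

open SimpleGraph Finset

section Moves

variable {V W : Type*}

def CoversEdges (G : SimpleGraph V) (x : ℕ → V) (m : ℕ) : Prop :=
  ∀ e ∈ G.edgeSet, ∃ k < m, e = s(x k, x (k + 1))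

theorem CoversEdges.map_iso {G : SimpleGraph V} {H : SimpleGraph W} {x : ℕ → V} {m : ℕ}
    (h : CoversEdges G x m) (φ : G ≃g H) : CoversEdges H (fun k => φ (x k)) m := by
  intro e he
  obtain ⟨k, hk, hke⟩ := h (e.map φ.symm) (φ.symm.map_mem_edgeSet_iff.mpr he)
  refine ⟨k, hk, ?_⟩
  rw [← Sym2.map_mk, ← hke, Sym2.map_map]
  simp

variable [DecidableEq V]

def moves (x : ℕ → V) (m : ℕ) : Finset ℕ :=
  {k ∈ range m | x k ≠ x (k + 1)}

def incidentMoves (x : ℕ → V) (m : ℕ) (v : V) : Finset ℕ :=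
  {k ∈ moves x m | v ∈ s(x k, x (k + 1))}

theorem card_moves_le (x : ℕ → V) (m : ℕ) : #(moves x m) ≤ m :=
  (card_filter_le _ _).trans_eq (card_range m)

theorem sum_card_incidentMoves [Fintype V] (x : ℕ → V) (m : ℕ) :
    ∑ v, #(incidentMoves x m v) = 2 * #(moves x m) := by
  calc ∑ v, #(incidentMoves x m v)
      = ∑ k ∈ moves x m, #{v | v ∈ s(x k, x (k + 1))} :=
        sum_card_bipartiteAbove_eq_sum_card_bipartiteBelow (fun v k => v ∈ s(x k, x (k + 1)))
    _ = ∑ _k ∈ moves x m, 2 := by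
        refine sum_congr rfl fun k hk => ?_
        have hne : x k ≠ x (k + 1) := (mem_filter.mp hk).2
        rw [← card_pair hne]
        congr 1
        ext v
        simp
    _ = 2 * #(moves x m) := by rw [sum_const, smul_eq_mul, mul_comm]

theorem degree_le_card_incidentMoves [Fintype V] {G : SimpleGraph V} [DecidableRel G.Adj]
    {x : ℕ → V} {m : ℕ} (h : CoversEdges G x m) (v : V) :
    G.degree v ≤ #(incidentMoves x m v) := by
  rw [← card_incidenceFinset_eq_degree]
  refine card_le_card_of_surjOn (fun k => s(x k, x (k + 1))) fun e he => ?_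
  rw [mem_coe, mem_incidenceFinset] at he
  obtain ⟨k, hk, rfl⟩ := h e he.1
  have hne : x k ≠ x (k + 1) := fun heq => G.not_isDiag_of_mem_edgeSet he.1 (by simp [heq])
  exact ⟨k, by simp [incidentMoves, moves, hk, hne, Sym2.mem_iff.mp he.2], rfl⟩

theorem card_incidentMoves_succ (x : ℕ → V) (m : ℕ) (v : V) :
    #(incidentMoves x (m + 1) v) =
      #(incidentMoves x m v) + if x m ≠ x (m + 1) ∧ v ∈ s(x m, x (m + 1)) then 1 else 0 := by
  simp only [incidentMoves, moves, filter_filter, card_filter, sum_range_succ]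

/-- Every visit of `v` strictly inside the walk accounts for two incident moves. -/
theorem even_card_incidentMoves_add (x : ℕ → V) (m : ℕ) (v : V) :
    Even (#(incidentMoves x m v) + (if x 0 = v then 1 else 0) + if x m = v then 1 else 0) := by
  induction m with
  | zero => simp [incidentMoves, moves]
  | succ m ih =>
    rw [Nat.even_iff] at ih ⊢
    rw [card_incidentMoves_succ]
    by_cases h1 : x m = v <;> by_cases h2 : x (m + 1) = v <;> grind

theorem card_edgeFinset_le_card_moves [Fintype V] {G : SimpleGraph V} [DecidableRel G.Adj]
    {x : ℕ → V} {m : ℕ} (h : CoversEdges G x m) : #G.edgeFinset ≤ #(moves x m) := by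
  have := sum_le_sum fun v (_ : v ∈ univ) => degree_le_card_incidentMoves h v
  rw [sum_degrees_eq_twice_card_edges, sum_card_incidentMoves] at this
  omega

theorem sum_degree_add_mod_two_le [Fintype V] {G : SimpleGraph V} [DecidableRel G.Adj]
    {x : ℕ → V} {m : ℕ} (h : CoversEdges G x m) :
    ∑ v, (G.degree v + G.degree v % 2) ≤ 2 * #(moves x m) + 2 := by
  calc ∑ v, (G.degree v + G.degree v % 2)
      ≤ ∑ v, (#(incidentMoves x m v) + (if x 0 = v then 1 else 0) + if x m = v then 1 else 0) := by
        refine sum_le_sum fun v _ => ?_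
        have hdeg := degree_le_card_incidentMoves h v
        have hpar := Nat.even_iff.mp (even_card_incidentMoves_add x m v)
        split_ifs at hpar ⊢ <;> omega
    _ = 2 * #(moves x m) + 2 := by
        simp only [sum_add_distrib, sum_card_incidentMoves, sum_ite_eq, mem_univ, if_true]

end Moves

/-- The least number of moves of a walk through all edges of `K_n`: `n(n-1)/2` for odd `n`; for even
`n` each vertex has odd degree and must be left or entered once more, except at the two ends. -/
def minMoves (n : ℕ) : ℕ :=
  if Odd n then (n ^ 2 - n) / 2 else n ^ 2 / 2 - 1

theorem minMoves_add_one {n : ℕ} (hn : 1 ≤ n) :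
    minMoves n + 1 = if Odd n then (n ^ 2 - n + 2) / 2 else n ^ 2 / 2 := by
  unfold minMoves
  split_ifs with hodd
  · omega
  · have : n ≠ 1 := by rintro rfl; exact hodd odd_one
    have : 4 ≤ n ^ 2 := by nlinarith [show 2 ≤ n by omega]
    omega

theorem two_mul_minMoves_add_one {n : ℕ} (hn : 1 ≤ n) :
    2 * minMoves n + 1 = if Odd n then n ^ 2 - n + 1 else n ^ 2 - 1 := by
  unfold minMoves
  split_ifs with hodd
  · have : Even (n ^ 2 - n) := by rw [sq, ← Nat.mul_sub_one]; exact Nat.even_mul_pred_self n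
    rw [Nat.even_iff] at this
    omega
  · have : Even (n ^ 2) := (Nat.not_odd_iff_even.mp hodd).pow_of_ne_zero two_ne_zero
    have : n ≠ 1 := by rintro rfl; exact hodd odd_one
    have : 4 ≤ n ^ 2 := by nlinarith [show 2 ≤ n by omega]
    rw [Nat.even_iff] at *
    omega

section LowerBound

variable {V : Type*}

theorem SweepCond.coversEdges_clamp {G : SimpleGraph V} {m : ℕ} {f : Fin (m + 1) → V}
    (h : SweepCond G f) : CoversEdges G (fun j => f (Fin.clamp j m)) m := by
  intro e he
  obtain ⟨k, hk, rfl⟩ := h e he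
  refine ⟨k, by omega, ?_⟩
  congr <;> simp <;> omega

theorem SweepCond.two_le_length [Nontrivial V] {l : ℕ} {f : Fin l → V} (h : SweepCond ⊤ f) :
    2 ≤ l := by
  obtain ⟨a, b, hab⟩ := exists_pair_ne V
  obtain ⟨k, hk, -⟩ := h s(a, b) (by simpa using hab)
  omega

variable [DecidableEq V]

theorem IsOpposite.card_moves_add_card_moves {m : ℕ} {f g : Fin (m + 1) → V}
    (h : IsOpposite ⊤ f g) :
    #(moves (fun j => f (Fin.clamp j m)) m) + #(moves (fun j => g (Fin.clamp j m)) m) = m := by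
  have hsplit : moves (fun j => g (Fin.clamp j m)) m =
      {k ∈ range m | ¬ f (Fin.clamp k m) ≠ f (Fin.clamp (k + 1) m)} := by
    refine filter_congr fun k hk => ?_
    have hkm : k + 1 < m + 1 := by simpa using hk
    have hopp := h k hkm
    have hc₀ : Fin.clamp k m = ⟨k, by omega⟩ := Fin.ext (by simp [Fin.clamp]; omega)
    have hc₁ : Fin.clamp (k + 1) m = ⟨k + 1, hkm⟩ := Fin.ext (by simp [Fin.clamp]; omega)
    rw [top_adj] at hopp
    simp only [hc₀, hc₁, hopp]
  rw [hsplit, moves, card_filter_add_card_filter_not, card_range]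

variable [Fintype V]

theorem minMoves_le_card_moves {x : ℕ → V} {m : ℕ} (h : CoversEdges ⊤ x m) :
    minMoves (Fintype.card V) ≤ #(moves x m) := by
  unfold minMoves
  split_ifs with hodd
  · have := card_edgeFinset_le_card_moves h
    rw [card_edgeFinset_top_eq_card_choose_two, Nat.choose_two_right] at this
    rwa [sq, ← Nat.mul_sub_one]
  · have := sum_degree_add_mod_two_le h
    rcases Nat.eq_zero_or_pos (Fintype.card V) with h0 | hpos
    · simp [h0]
    have hdeg : Fintype.card V - 1 + (Fintype.card V - 1) % 2 = Fintype.card V := by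
      rw [Nat.not_odd_iff_even, Nat.even_iff] at hodd
      omega
    simp only [complete_graph_degree, hdeg, sum_const, card_univ, smul_eq_mul] at this
    rw [sq]
    omega

theorem SweepCond.minMoves_add_one_le [Nontrivial V] {l : ℕ} {f : Fin l → V}
    (h : SweepCond ⊤ f) : minMoves (Fintype.card V) + 1 ≤ l := by
  obtain ⟨m, rfl⟩ : ∃ m, l = m + 1 := ⟨l - 1, by have := h.two_le_length; omega⟩
  have := minMoves_le_card_moves h.coversEdges_clamp
  have := card_moves_le (fun j => f (Fin.clamp j m)) m
  omega

theorem CoversEdges.ne_succ_of_le_minMoves {x : ℕ → V} {m : ℕ} (h : CoversEdges ⊤ x m)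
    (hm : m ≤ minMoves (Fintype.card V)) : ∀ k < m, x k ≠ x (k + 1) := by
  have hcard : #(moves x m) = #(range m) := by
    have := minMoves_le_card_moves h
    have := card_moves_le x m
    rw [card_range]
    omega
  exact fun k hk => filter_card_eq hcard k (mem_range.mpr hk)

theorem IsOpposite.two_mul_minMoves_add_one_le [Nontrivial V] {l : ℕ} {f g : Fin l → V}
    (hf : SweepCond ⊤ f) (hg : SweepCond ⊤ g) (h : IsOpposite ⊤ f g) :
    2 * minMoves (Fintype.card V) + 1 ≤ l := by
  obtain ⟨m, rfl⟩ : ∃ m, l = m + 1 := ⟨l - 1, by have := hf.two_le_length; omega⟩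
  have := minMoves_le_card_moves hf.coversEdges_clamp
  have := minMoves_le_card_moves hg.coversEdges_clamp
  have := h.card_moves_add_card_moves
  omega

end LowerBound

section Distance

variable {V : Type*}

theorem mDist_le {G : SimpleGraph V} {l : ℕ} (f g : Fin l → V) (i : Fin l) :
    mDist G f g ≤ G.dist (f i) (g i) :=
  Nat.sInf_le ⟨i, rfl⟩

theorem mDist_eq_zero_of_eq {G : SimpleGraph V} {l : ℕ} {f g : Fin l → V} {i : Fin l}
    (h : f i = g i) : mDist G f g = 0 :=
  Nat.eq_zero_of_le_zero ((mDist_le f g i).trans_eq (by rw [h, dist_self]))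

theorem dist_top_le_one (u v : V) : (⊤ : SimpleGraph V).dist u v ≤ 1 := by
  rcases eq_or_ne u v with rfl | huv
  · simp
  · exact (dist_eq_one_iff_adj.mpr ((top_adj u v).mpr huv)).le

theorem mDist_top_le_one {l : ℕ} (f g : Fin l → V) (i : Fin l) : mDist ⊤ f g ≤ 1 :=
  (mDist_le f g i).trans (dist_top_le_one _ _)

theorem mDist_top_le_one_of_surjective [Nonempty V] {l : ℕ} {f : Fin l → V}
    (hf : Function.Surjective f) (g : Fin l → V) : mDist ⊤ f g ≤ 1 :=
  mDist_top_le_one f g (hf (Classical.arbitrary V)).choose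

theorem mDist_top_eq_one {l : ℕ} {f g : Fin l → V} (i : Fin l) (h : ∀ j, f j ≠ g j) :
    mDist ⊤ f g = 1 := by
  refine (mDist_top_le_one f g i).antisymm (le_csInf ⟨_, i, rfl⟩ ?_)
  rintro _ ⟨j, rfl⟩
  exact (dist_eq_one_iff_adj.mpr ((top_adj _ _).mpr (h j))).ge

/-- In `K_2`, whichever of two opposite walks moves first lands on the other one. -/
theorem IsOpposite.mDist_eq_zero_fin_two {l : ℕ} {f g : Fin l → Fin 2} (hl : 2 ≤ l)
    (h : IsOpposite ⊤ f g) : mDist ⊤ f g = 0 := by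
  have third : ∀ p q r : Fin 2, p ≠ r → q ≠ r → p = q := by decide
  have h0 := h 0 hl
  rw [top_adj] at h0
  by_cases h00 : f ⟨0, by omega⟩ = g ⟨0, by omega⟩
  · exact mDist_eq_zero_of_eq h00
  by_cases hf : f ⟨0, by omega⟩ = f ⟨1, hl⟩
  · have hg : g ⟨0, by omega⟩ ≠ g ⟨1, hl⟩ := fun hg => h0.mpr hg hf
    exact mDist_eq_zero_of_eq (i := ⟨1, hl⟩) (hf.symm.trans (third _ _ _ (Ne.symm hg) h00).symm)
  · exact mDist_eq_zero_of_eq (i := ⟨1, hl⟩)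
      ((third _ _ _ (Ne.symm hf) (Ne.symm h00)).trans (h0.mp hf))

end Distance

/-- The common shape of `strongEdgeL`, `directEdgeL` and `cartesianEdgeL`. -/
theorem sInf_length_of_sSup_eq {V : Type*} {Q : (l : ℕ) → (Fin l → V) → (Fin l → V) → ℕ → Prop}
    {l₀ d : ℕ} (hwit : ∃ f g, Q l₀ f g d) (hmax : ∀ l f g e, Q l f g e → e ≤ d)
    (hmin : ∀ l f g e, Q l f g e → l₀ ≤ l) :
    sInf {l | ∃ f g : Fin l → V, Q l f g (sSup {e | ∃ (l : ℕ) (f g : Fin l → V), Q l f g e})} =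
      l₀ := by
  obtain ⟨f, g, hfg⟩ := hwit
  have hsup : sSup {e | ∃ (l : ℕ) (f g : Fin l → V), Q l f g e} = d :=
    IsGreatest.csSup_eq ⟨⟨l₀, f, g, hfg⟩, fun e ⟨l, f, g, h⟩ => hmax l f g e h⟩
  rw [hsup]
  exact IsLeast.csInf_eq ⟨⟨f, g, hfg⟩, fun l ⟨f, g, h⟩ => hmin l f g d h⟩

section Construction

variable {V : Type*}

theorem IsSweep.isLazySweep {G : SimpleGraph V} {l : ℕ} {f : Fin l → V}
    (h : IsSweep G f) : IsLazySweep G f :=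
  ⟨⟨h.1.1, fun i hi => Or.inl (h.1.2 i hi)⟩, h.2⟩

theorem CoversEdges.sweepCond {G : SimpleGraph V} {x : ℕ → V} {m : ℕ} (h : CoversEdges G x m) :
    SweepCond G (fun i : Fin (m + 1) => x i) := fun e he =>
  let ⟨k, hk, hke⟩ := h e he
  ⟨k, by omega, hke⟩

theorem CoversEdges.surjective [Nontrivial V] {x : ℕ → V} {m : ℕ} (h : CoversEdges ⊤ x m) :
    Function.Surjective (fun i : Fin (m + 1) => x i) := by
  intro v
  obtain ⟨w, hw⟩ := exists_ne v
  obtain ⟨k, hk, hke⟩ := h s(v, w) (by simpa using hw.symm)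
  rcases Sym2.eq_iff.mp hke with ⟨hv, -⟩ | ⟨hv, -⟩
  · exact ⟨⟨k, by omega⟩, hv.symm⟩
  · exact ⟨⟨k + 1, by omega⟩, hv.symm⟩

theorem CoversEdges.isLazySweep [Nontrivial V] {x : ℕ → V} {m : ℕ} (h : CoversEdges ⊤ x m) :
    IsLazySweep ⊤ (fun i : Fin (m + 1) => x i) :=
  ⟨⟨h.surjective, fun _ _ => (ne_or_eq _ _).imp_left (top_adj _ _).mpr⟩, h.sweepCond⟩

theorem CoversEdges.isSweep [Nontrivial V] {x : ℕ → V} {m : ℕ} (h : CoversEdges ⊤ x m)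
    (hx : ∀ k < m, x k ≠ x (k + 1)) : IsSweep ⊤ (fun i : Fin (m + 1) => x i) :=
  ⟨⟨h.surjective, fun k hk => (top_adj _ _).mpr (hx k (by omega))⟩, h.sweepCond⟩

/-- The walk `x` slowed down to two steps per move: at step `k` it moves during the first half-step
if `p k` holds, and during the second otherwise. -/
def stagger (p : ℕ → Prop) [DecidablePred p] (x : ℕ → V) (j : ℕ) : V :=
  if j % 2 = 0 then x (j / 2) else if p (j / 2) then x (j / 2 + 1) else x (j / 2)

section Stagger

variable (p : ℕ → Prop) [DecidablePred p] (x : ℕ → V) (k : ℕ)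

@[simp]
theorem stagger_two_mul : stagger p x (2 * k) = x k := by
  simp [stagger]

@[simp]
theorem stagger_two_mul_add_one : stagger p x (2 * k + 1) = if p k then x (k + 1) else x k := by
  simp [stagger, Nat.add_mod, Nat.add_div]

theorem stagger_two_mul_add_two : stagger p x (2 * k + 1 + 1) = x (k + 1) :=
  stagger_two_mul p x (k + 1)

end Stagger

theorem CoversEdges.stagger {G : SimpleGraph V} {x : ℕ → V} {m : ℕ} (h : CoversEdges G x m)
    (p : ℕ → Prop) [DecidablePred p] : CoversEdges G (stagger p x) (2 * m) := by
  intro e he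
  obtain ⟨k, hk, rfl⟩ := h e he
  by_cases hp : p k
  · exact ⟨2 * k, by omega, by simp [hp]⟩
  · exact ⟨2 * k + 1, by omega, by simp [hp, stagger_two_mul_add_two]⟩

theorem isOpposite_stagger {x y : ℕ → V} {m : ℕ} (hx : ∀ k < m, x k ≠ x (k + 1))
    (hy : ∀ k < m, y k ≠ y (k + 1)) (p : ℕ → Prop) [DecidablePred p] :
    IsOpposite ⊤ (fun i : Fin (2 * m + 1) => stagger p x i)
      (fun i : Fin (2 * m + 1) => stagger (fun k => ¬ p k) y i) := by
  intro j hj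
  simp only [top_adj]
  obtain ⟨k, rfl | rfl⟩ := Nat.even_or_odd' j
  · by_cases hp : p k <;> simp [hp, hx k (by omega), hy k (by omega)]
  · by_cases hp : p k <;>
      simp [hp, stagger_two_mul_add_two, hx k (by omega), hy k (by omega)]

theorem stagger_ne_stagger [DecidableEq V] {x y : ℕ → V} (hxy : ∀ k, x k ≠ y k)
    (hswap : ∀ k, x (k + 1) = y k → x k ≠ y (k + 1)) (j : ℕ) :
    stagger (fun k => x (k + 1) ≠ y k) x j ≠ stagger (fun k => ¬ x (k + 1) ≠ y k) y j := by
  obtain ⟨k, rfl | rfl⟩ := Nat.even_or_odd' j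
  · simpa using hxy k
  · by_cases hk : x (k + 1) = y k
    · simpa [hk] using hswap k hk
    · simp [hk]

end Construction

section Lists

open List

variable {α : Type*}

def fan (c : α) (F : ℕ → List α) (m : ℕ) : List α :=
  c :: (List.range m).flatMap fun j => F j ++ [c]

theorem fan_succ (c : α) (F : ℕ → List α) (m : ℕ) :
    fan c F (m + 1) = fan c F m ++ (F m ++ [c]) := by
  simp [fan, List.range_succ]

theorem fan_eq_append_singleton (c : α) (F : ℕ → List α) (m : ℕ) :
    ∃ P, fan c F m = P ++ [c] := by
  induction m with
  | zero => exact ⟨[], by simp [fan]⟩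
  | succ m _ => exact ⟨fan c F m ++ F m, by simp [fan_succ]⟩

theorem infix_fan (c : α) (F : ℕ → List α) {j m : ℕ} (hj : j < m) :
    c :: (F j ++ [c]) <:+: fan c F m := by
  induction m with
  | zero => omega
  | succ m ih =>
    rw [fan_succ]
    rcases Nat.lt_succ_iff_lt_or_eq.mp hj with hj | rfl
    · exact (ih hj).trans (prefix_append _ _).isInfix
    · obtain ⟨P, hP⟩ := fan_eq_append_singleton c F j
      exact ⟨P, [], by simp [hP]⟩

theorem length_fan (c : α) {F : ℕ → List α} {d : ℕ} (hF : ∀ j, (F j).length = d) (m : ℕ) :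
    (fan c F m).length = (d + 1) * m + 1 := by
  induction m with
  | zero => simp [fan]
  | succ m ih => rw [fan_succ]; simp [ih, hF]; ring

def CoversBelow (n : ℕ) (L : List ℕ) : Prop :=
  ∀ u v, u < v → v < n → [u, v] <:+: L ∨ [v, u] <:+: L

theorem CoversBelow.mono_infix {n : ℕ} {L L' : List ℕ} (h : CoversBelow n L) (hL : L <:+: L') :
    CoversBelow n L' := fun u v huv hv => (h u v huv hv).imp (·.trans hL) (·.trans hL)

theorem eq_zero_or_odd_or_even_succ (u : ℕ) : u = 0 ∨ ∃ j, u = 2 * j + 1 ∨ u = 2 * j + 2 := by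
  obtain ⟨j, rfl | rfl⟩ := Nat.even_or_odd' u
  · cases j with
    | zero => exact Or.inl rfl
    | succ j => exact Or.inr ⟨j, Or.inr (by ring)⟩
  · exact Or.inr ⟨j, Or.inl rfl⟩

/-- An Eulerian circuit of `K_{2m+1}` from `0` to `0`: the circuit of `K_{2m-1}`, then the new
vertices `a = 2m` and `b = 2m - 1` are joined to the old ones by the loops `a, 2j+1, b, 2j+2, a`. -/
def eulerList : ℕ → List ℕ
  | 0 => [0]
  | m + 1 => eulerList m ++ fan (2 * m + 2) (fun j => [2 * j + 1, 2 * m + 1, 2 * j + 2]) m ++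
      [2 * m + 1, 0]

theorem eulerList_eq_append_zero (m : ℕ) : ∃ P, eulerList m = P ++ [0] := by
  cases m with
  | zero => exact ⟨[], rfl⟩
  | succ m => exact ⟨_, by rw [eulerList, append_assoc _ [2 * m + 1]]; rfl⟩

theorem length_eulerList (m : ℕ) : (eulerList m).length = m * (2 * m + 1) + 1 := by
  induction m with
  | zero => rfl
  | succ m ih =>
    rw [eulerList, length_append, length_append, ih,
      length_fan _ (F := fun j => [2 * j + 1, 2 * m + 1, 2 * j + 2]) (d := 3) (fun _ => rfl)]
    simp
    ring

theorem coversBelow_eulerList (m : ℕ) : CoversBelow (2 * m + 1) (eulerList m) := by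
  induction m with
  | zero => intro u v _ _; omega
  | succ m ih =>
    let F : ℕ → List ℕ := fun j => [2 * j + 1, 2 * m + 1, 2 * j + 2]
    have hE : eulerList (m + 1) = eulerList m ++ fan (2 * m + 2) F m ++ [2 * m + 1, 0] := rfl
    have hloop : ∀ j < m,
        [2 * m + 2, 2 * j + 1, 2 * m + 1, 2 * j + 2, 2 * m + 2] <:+: eulerList (m + 1) :=
      fun j hj => (infix_fan _ F hj).trans (hE ▸ infix_append _ _ _)
    intro u v huv hv
    obtain hv | rfl | rfl : v < 2 * m + 1 ∨ v = 2 * m + 1 ∨ v = 2 * m + 2 := by omega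
    · exact ih.mono_infix (hE ▸ (prefix_append _ _).isInfix.trans (prefix_append _ _).isInfix) u v
        huv hv
    · obtain rfl | ⟨j, rfl | rfl⟩ := eq_zero_or_odd_or_even_succ u
      · exact Or.inr ⟨eulerList m ++ fan (2 * m + 2) F m, [], by simp [hE]⟩
      · exact Or.inl ((infix_append [2 * m + 2] _ _).trans (hloop j (by omega)))
      · exact Or.inr ((infix_append [2 * m + 2, 2 * j + 1] _ _).trans (hloop j (by omega)))
    · obtain rfl | ⟨j, rfl | rfl⟩ := eq_zero_or_odd_or_even_succ u
      · obtain ⟨P, hP⟩ := eulerList_eq_append_zero m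
        exact Or.inl ⟨P, (fan (2 * m + 2) F m).tail ++ [2 * m + 1, 0], by simp [hE, hP, fan]⟩
      · obtain rfl | hj : j = m ∨ j < m := by omega
        · obtain ⟨P, hP⟩ := fan_eq_append_singleton (2 * j + 2) F j
          exact Or.inr ⟨eulerList j ++ P, [0], by simp [hE, hP]⟩
        · exact Or.inr ((infix_append [] _ _).trans (hloop j hj))
      · exact Or.inl ((infix_append [2 * m + 2, 2 * j + 1, 2 * m + 1] _ _).trans
          (hloop j (by omega)))

/-- A walk through all edges of `K_{2m+2}`: the Eulerian circuit of `K_{2m+1}` followed by the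
loops `b, 2j+1, 2j+2, b` at the new vertex `b = 2m + 1`. -/
def evenList (m : ℕ) : List ℕ :=
  eulerList m ++ fan (2 * m + 1) (fun j => [2 * j + 1, 2 * j + 2]) m

theorem length_evenList (m : ℕ) : (evenList m).length = 2 * (m + 1) ^ 2 := by
  rw [evenList, length_append, length_eulerList,
    length_fan _ (F := fun j => [2 * j + 1, 2 * j + 2]) (d := 2) (fun _ => rfl)]
  ring

theorem coversBelow_evenList (m : ℕ) : CoversBelow (2 * m + 2) (evenList m) := by
  let F : ℕ → List ℕ := fun j => [2 * j + 1, 2 * j + 2]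
  have hloop : ∀ j < m, [2 * m + 1, 2 * j + 1, 2 * j + 2, 2 * m + 1] <:+: evenList m :=
    fun j hj => (infix_fan _ F hj).trans (suffix_append _ _).isInfix
  intro u v huv hv
  obtain hv | rfl : v < 2 * m + 1 ∨ v = 2 * m + 1 := by omega
  · exact (coversBelow_eulerList m).mono_infix (prefix_append _ _).isInfix u v huv hv
  · obtain rfl | ⟨j, rfl | rfl⟩ := eq_zero_or_odd_or_even_succ u
    · obtain ⟨P, hP⟩ := eulerList_eq_append_zero m
      exact Or.inl ⟨P, (fan (2 * m + 1) F m).tail, by simp [evenList, hP, fan, F]⟩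
    · exact Or.inr ((infix_append [] _ _).trans (hloop j (by omega)))
    · exact Or.inl ((infix_append [2 * m + 1, 2 * j + 1] _ _).trans (hloop j (by omega)))

theorem exists_coversBelow (n : ℕ) (hn : 1 ≤ n) :
    ∃ L, CoversBelow n L ∧ L.length = minMoves n + 1 := by
  obtain ⟨m, rfl | rfl⟩ := Nat.even_or_odd' n
  · obtain ⟨m, rfl⟩ : ∃ k, m = k + 1 := ⟨m - 1, by omega⟩
    refine ⟨evenList m, coversBelow_evenList m, ?_⟩
    have h : (2 * (m + 1)) ^ 2 / 2 = 2 * (m + 1) ^ 2 := by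
      rw [mul_pow]; omega
    rw [length_evenList, minMoves, if_neg (by simp), h]
    have : 1 ≤ (m + 1) ^ 2 := Nat.one_le_pow _ _ (by omega)
    omega
  · refine ⟨eulerList m, coversBelow_eulerList m, ?_⟩
    have h : (2 * m + 1) ^ 2 - (2 * m + 1) = 2 * (m * (2 * m + 1)) := by
      rw [Nat.sub_eq_of_eq_add]; ring
    rw [length_eulerList, minMoves, if_pos (by simp), h, Nat.mul_div_cancel_left _ two_pos]

end Lists

section CompleteGraph

variable {n : ℕ}

theorem exists_coversEdges_top (hn : 1 ≤ n) : ∃ x : ℕ → Fin n, CoversEdges ⊤ x (minMoves n) := by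
  have : NeZero n := ⟨by omega⟩
  obtain ⟨L, hL, hlen⟩ := exists_coversBelow n hn
  -- `Fin.ofNat` reduces the entries mod `n`; only the pairs they cover matter.
  refine ⟨fun k => Fin.ofNat n (L.getD k 0), ?_⟩
  have hpair : ∀ u v : Fin n, [u.val, v.val] <:+: L →
      ∃ k < minMoves n, s(u, v) = s(Fin.ofNat n (L.getD k 0), Fin.ofNat n (L.getD (k + 1) 0)) := by
    rintro u v ⟨s, t, hst⟩
    refine ⟨s.length, ?_, ?_⟩
    · have := congrArg List.length hst
      simp only [List.length_append, List.length_cons, List.length_nil] at this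
      omega
    · subst hst
      simp
  intro e he
  induction e using Sym2.ind with
  | _ u v =>
  rw [mem_edgeSet, top_adj] at he
  rcases Fin.lt_or_lt_of_ne he with huv | hvu
  · rcases hL u v huv v.isLt with h | h
    · exact hpair u v h
    · exact (hpair v u h).imp fun _ ⟨hk, he⟩ => ⟨hk, Sym2.eq_swap.trans he⟩
  · rcases hL v u hvu u.isLt with h | h
    · exact (hpair v u h).imp fun _ ⟨hk, he⟩ => ⟨hk, Sym2.eq_swap.trans he⟩
    · exact hpair u v h

theorem exists_isSweep_pair_top (hn : 2 ≤ n) :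
    ∃ f g : Fin (minMoves n + 1) → Fin n, IsSweep ⊤ f ∧ IsSweep ⊤ g ∧ mDist ⊤ f g = 1 := by
  have : NeZero n := ⟨by omega⟩
  have : Nontrivial (Fin n) := Fin.nontrivial_iff_two_le.mpr hn
  obtain ⟨x, hx⟩ := exists_coversEdges_top (by omega : 1 ≤ n)
  have hstep := hx.ne_succ_of_le_minMoves (by simp)
  have hy : CoversEdges ⊤ (fun k => x k + 1) (minMoves n) :=
    hx.map_iso (Iso.completeGraph (Equiv.addRight 1))
  refine ⟨_, _, hx.isSweep hstep, hy.isSweep fun k hk h => hstep k hk (add_right_cancel h),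
    mDist_top_eq_one 0 fun i => ?_⟩
  simp [Fin.ext_iff]
  omega

theorem exists_isOpposite_pair_top (hn : 2 ≤ n) :
    ∃ f g : Fin (2 * minMoves n + 1) → Fin n, IsLazySweep ⊤ f ∧ IsLazySweep ⊤ g ∧
      IsOpposite ⊤ f g ∧ (3 ≤ n → mDist ⊤ f g = 1) := by
  have : NeZero n := ⟨by omega⟩
  have : Nontrivial (Fin n) := Fin.nontrivial_iff_two_le.mpr hn
  obtain ⟨x, hx⟩ := exists_coversEdges_top (by omega : 1 ≤ n)
  have hstep := hx.ne_succ_of_le_minMoves (by simp)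
  have hy : CoversEdges ⊤ (fun k => x k + 1) (minMoves n) :=
    hx.map_iso (Iso.completeGraph (Equiv.addRight 1))
  let p : ℕ → Prop := fun k => x (k + 1) ≠ x k + 1
  refine ⟨_, _, (hx.stagger p).isLazySweep, (hy.stagger fun k => ¬ p k).isLazySweep,
    isOpposite_stagger hstep (fun k hk h => hstep k hk (add_right_cancel h)) p,
    fun hn3 => mDist_top_eq_one 0 fun i => stagger_ne_stagger ?_ ?_ i⟩
  · intro k
    simp [Fin.ext_iff]
    omega
  · intro k hk
    rw [hk, add_assoc, ne_eq, left_eq_add, Fin.ext_iff]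
    simp [Fin.val_add, Nat.mod_eq_of_lt (show 2 < n by omega)]

theorem directEdgeL_top (hn : 2 ≤ n) :
    directEdgeL (⊤ : SimpleGraph (Fin n)) = minMoves n + 1 := by
  have : Nontrivial (Fin n) := Fin.nontrivial_iff_two_le.mpr hn
  obtain ⟨f, g, hf, hg, hd⟩ := exists_isSweep_pair_top hn
  exact sInf_length_of_sSup_eq (Q := fun _ f g d => IsSweep ⊤ f ∧ IsSweep ⊤ g ∧ mDist ⊤ f g = d)
    ⟨f, g, hf, hg, hd⟩
    (fun _ _ g _ ⟨hf, _, he⟩ => he ▸ mDist_top_le_one_of_surjective hf.1.1 g)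
    (fun _ _ _ _ ⟨hf, _⟩ => by simpa using hf.2.minMoves_add_one_le)

theorem strongEdgeL_top (hn : 2 ≤ n) :
    strongEdgeL (⊤ : SimpleGraph (Fin n)) = minMoves n + 1 := by
  have : Nontrivial (Fin n) := Fin.nontrivial_iff_two_le.mpr hn
  obtain ⟨f, g, hf, hg, hd⟩ := exists_isSweep_pair_top hn
  exact sInf_length_of_sSup_eq
    (Q := fun _ f g d => IsLazySweep ⊤ f ∧ IsLazySweep ⊤ g ∧ mDist ⊤ f g = d)
    ⟨f, g, hf.isLazySweep, hg.isLazySweep, hd⟩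
    (fun _ _ g _ ⟨hf, _, he⟩ => he ▸ mDist_top_le_one_of_surjective hf.1.1 g)
    (fun _ _ _ _ ⟨hf, _⟩ => by simpa using hf.2.minMoves_add_one_le)

theorem cartesianEdgeL_top (hn : 2 ≤ n) :
    cartesianEdgeL (⊤ : SimpleGraph (Fin n)) = 2 * minMoves n + 1 := by
  have : Nontrivial (Fin n) := Fin.nontrivial_iff_two_le.mpr hn
  obtain ⟨f, g, hf, hg, hfg, hd⟩ := exists_isOpposite_pair_top hn
  let Q : (l : ℕ) → (Fin l → Fin n) → (Fin l → Fin n) → ℕ → Prop := fun _ f g d =>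
    IsLazySweep ⊤ f ∧ IsLazySweep ⊤ g ∧ IsOpposite ⊤ f g ∧ mDist ⊤ f g = d
  have hmin : ∀ l f g e, Q l f g e → 2 * minMoves n + 1 ≤ l := fun _ _ _ _ ⟨hf, hg, hfg, _⟩ => by
    simpa using hfg.two_mul_minMoves_add_one_le hf.2 hg.2
  rcases hn.eq_or_lt with rfl | hn
  · have hzero : ∀ l (f g : Fin l → Fin 2), IsLazySweep ⊤ f → IsOpposite ⊤ f g →
        mDist ⊤ f g = 0 := fun _ _ _ hf hfg => hfg.mDist_eq_zero_fin_two hf.2.two_le_length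
    exact sInf_length_of_sSup_eq (Q := Q) ⟨f, g, hf, hg, hfg, hzero _ f g hf hfg⟩
      (fun _ f g _ ⟨hf, _, hfg, he⟩ => (he ▸ hzero _ f g hf hfg).le) hmin
  · exact sInf_length_of_sSup_eq (Q := Q) ⟨f, g, hf, hg, hfg, hd hn⟩
      (fun _ _ g _ ⟨hf, _, _, he⟩ => he ▸ mDist_top_le_one_of_surjective hf.1.1 g) hmin

end CompleteGraph

theorem stmt19 (n : ℕ) (hn : 2 ≤ n) :
    strongEdgeL (⊤ : SimpleGraph (Fin n)) =
        (if Odd n then (n ^ 2 - n + 2) / 2 else n ^ 2 / 2) ∧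
      directEdgeL (⊤ : SimpleGraph (Fin n)) =
        (if Odd n then (n ^ 2 - n + 2) / 2 else n ^ 2 / 2) ∧
        cartesianEdgeL (⊤ : SimpleGraph (Fin n)) =
          (if Odd n then n ^ 2 - n + 1 else n ^ 2 - 1) := by
  rw [← minMoves_add_one (by omega), ← two_mul_minMoves_add_one (by omega)]
  exact ⟨strongEdgeL_top hn, directEdgeL_top hn, cartesianEdgeL_top hn⟩
end
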